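/- arXiv:1111.4723 — 7 statements merged into one kernel-verified Lean document; each statement's English description precedes it below -/
import Mathlib

section
/- Let M' be a super triangular matrix of dimension m (an m×m upper-triangular matrix of nonnegative integers all of whose SE-cells are zero). Then M' is the reduced matrix of some self-dual Fishburn matrix if and only if it satisfies the following two conditions: (i) for every i with 1 ≤ i ≤ ⌈m/2⌉, column i contains a nonzero entry; (ii) for every i with 1 ≤ i ≤ ⌈m/2⌉, either row i or column m+1−i contains a nonzero entry. -/
open Finset

/-- Square matrices of nonnegative integers of dimension `m` (0-based indexing). -/
abbrev Mat (m : ℕ) := Matrix (Fin m) (Fin m) ℕ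

/-- Upper-triangular: all entries strictly below the main diagonal vanish. -/
def UT {m : ℕ} (M : Mat m) : Prop := ∀ i j : Fin m, (j : ℕ) < (i : ℕ) → M i j = 0

/-- The size of a matrix: the sum of all its entries. -/
def msize {m : ℕ} (M : Mat m) : ℕ := ∑ i : Fin m, ∑ j : Fin m, M i j

/-- Row `i` contains a nonzero entry. -/
def rowNonzero {m : ℕ} (M : Mat m) (i : Fin m) : Prop := ∃ j, M i j ≠ 0

/-- Column `j` contains a nonzero entry. -/
def colNonzero {m : ℕ} (M : Mat m) (j : Fin m) : Prop := ∃ i, M i j ≠ 0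

/-- The dual matrix: transpose along the antidiagonal, `M̄_{i,j} = M_{m+1-j,m+1-i}`. -/
def dual {m : ℕ} (M : Mat m) : Mat m := fun i j => M j.rev i.rev

/-- A matrix is self-dual if it equals its dual. -/
def SelfDual {m : ℕ} (M : Mat m) : Prop := M = dual M

/-- A Fishburn matrix: upper-triangular, every row and every column contains a
nonzero entry. -/
def IsFishburn {m : ℕ} (M : Mat m) : Prop :=
  UT M ∧ (∀ i, rowNonzero M i) ∧ (∀ j, colNonzero M j)

/-- The reduced size: sum of the entries in NW-cells and diagonal cells
(in 1-based terms, cells `(i,j)` with `i + j ≤ m + 1`). -/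
def reducedSize {m : ℕ} (M : Mat m) : ℕ :=
  ∑ i : Fin m, ∑ j : Fin m, if (i : ℕ) + (j : ℕ) + 1 ≤ m then M i j else 0

/-- The reduced matrix: all entries in SE-cells are replaced by zeros. -/
def reduced {m : ℕ} (M : Mat m) : Mat m :=
  fun i j => if (i : ℕ) + (j : ℕ) + 1 ≤ m then M i j else 0

/-- A super triangular matrix: upper-triangular and all SE-cells are zero. -/
def SuperTri {m : ℕ} (M : Mat m) : Prop :=
  UT M ∧ ∀ i j : Fin m, m < (i : ℕ) + (j : ℕ) + 1 → M i j = 0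

/-- The sum of the first row. -/
def firstRowSum {m : ℕ} (M : Mat m) : ℕ :=
  ∑ i : Fin m, ∑ j : Fin m, if (i : ℕ) = 0 then M i j else 0

/-- The sum of the last column. -/
def lastColSum {m : ℕ} (M : Mat m) : ℕ :=
  ∑ i : Fin m, ∑ j : Fin m, if (j : ℕ) + 1 = m then M i j else 0

/-- The sum of the diagonal cells (cells `(i,j)` with `i + j = m + 1`, 1-based). -/
def diagSum {m : ℕ} (M : Mat m) : ℕ :=
  ∑ i : Fin m, ∑ j : Fin m, if (i : ℕ) + (j : ℕ) + 1 = m then M i j else 0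

/-- The sum of the center column (column `k+1` of a matrix of dimension `2k+1`). -/
def centerColSum {m : ℕ} (M : Mat m) : ℕ :=
  ∑ i : Fin m, ∑ j : Fin m, if 2 * (j : ℕ) + 1 = m then M i j else 0

/-- Square matrices of arbitrary dimension. -/
abbrev SMat := Σ m : ℕ, Mat m

/-- `M(n)`: self-dual Fishburn matrices of reduced size `n`. -/
def Mset (n : ℕ) : Set SMat :=
  {A | IsFishburn A.2 ∧ SelfDual A.2 ∧ reducedSize A.2 = n}

/-- `M(n,k)`: matrices of `M(n)` whose first row has sum `k`. -/
def Mset₂ (n k : ℕ) : Set SMat := {A ∈ Mset n | firstRowSum A.2 = k}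

/-- `M(n,k,p)`: matrices of `M(n,k)` whose diagonal cells have sum `p`. -/
def Mset₃ (n k p : ℕ) : Set SMat := {A ∈ Mset₂ n k | diagSum A.2 = p}

/-- `EM(n,k)`: matrices of `M(n,k)` of even dimension. -/
def EMset (n k : ℕ) : Set SMat := {A ∈ Mset₂ n k | Even A.1}

/-- `OM(n,k)`: matrices of `M(n,k)` of odd dimension. -/
def OMset (n k : ℕ) : Set SMat := {A ∈ Mset₂ n k | Odd A.1}

/-- `RM(n)`: row-Fishburn matrices of size `n`. -/
def RMset (n : ℕ) : Set SMat :=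
  {A | UT A.2 ∧ (∀ i, rowNonzero A.2 i) ∧ msize A.2 = n}

/-- `RM(n,k)`: row-Fishburn matrices of size `n` whose last column has sum `k`. -/
def RMset₂ (n k : ℕ) : Set SMat := {A ∈ RMset n | lastColSum A.2 = k}

/-- `RM(n,k,p)`: matrices of `RM(n,k)` whose first row has sum `p`. -/
def RMset₃ (n k p : ℕ) : Set SMat := {A ∈ RMset₂ n k | firstRowSum A.2 = p}

/-- `SM(n)`: super triangular matrices of size `n` and dimension `2k+1` such that
(a) each of the first `k` columns contains a nonzero entry, and
(b) for `1 ≤ i ≤ k`, row `k+1-i` or column `k+1+i` contains a nonzero entry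
(0-based: for `a < k`, row `a` or column `b` with `a + b = 2k` is nonzero). -/
def SMset (n : ℕ) : Set SMat :=
  {A | SuperTri A.2 ∧ msize A.2 = n ∧
    ∃ k : ℕ, A.1 = 2 * k + 1 ∧
      (∀ j : Fin A.1, (j : ℕ) < k → colNonzero A.2 j) ∧
      (∀ a b : Fin A.1, (a : ℕ) < k → (a : ℕ) + (b : ℕ) = 2 * k →
        rowNonzero A.2 a ∨ colNonzero A.2 b)}

/-- `SM(n,k,p)`: matrices of `SM(n)` whose first row has sum `k` and whose center
column has sum `p`. -/
def SMset₃ (n k p : ℕ) : Set SMat :=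
  {A ∈ SMset n | firstRowSum A.2 = k ∧ centerColSum A.2 = p}

/-- `B(n)`: upper-triangular matrices of size `n` in which every row except
possibly the first contains a nonzero entry. -/
def Bset (n : ℕ) : Set SMat :=
  {A | UT A.2 ∧ (∀ i : Fin A.1, (i : ℕ) ≠ 0 → rowNonzero A.2 i) ∧ msize A.2 = n}

/-- `B(n,k,p)`: matrices of `B(n)` whose first row has sum `p` and whose last
column has sum `k`. -/
def Bset₃ (n k p : ℕ) : Set SMat :=
  {A ∈ Bset n | firstRowSum A.2 = p ∧ lastColSum A.2 = k}

/-- The "mirror completion" of a super triangular matrix: fill SE-cells with the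
antidiagonal reflection. -/
def mir {m : ℕ} (M' : Mat m) : Mat m :=
  fun i j => if (i : ℕ) + (j : ℕ) + 1 ≤ m then M' i j else M' j.rev i.rev

/-- A super triangular matrix `M'` of dimension `m` is the reduced
matrix of some self-dual Fishburn matrix iff (i) each of columns `1,…,⌈m/2⌉`
contains a nonzero entry, and (ii) for `1 ≤ i ≤ ⌈m/2⌉`, row `i` or column
`m+1-i` contains a nonzero entry (0-based: rows `a` and columns `b` with
`a + b = m - 1`). -/
theorem stmt0 (m : ℕ) (M' : Mat m) (hM' : SuperTri M') :
    (∃ M : Mat m, IsFishburn M ∧ SelfDual M ∧ reduced M = M') ↔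
      ((∀ j : Fin m, (j : ℕ) < (m + 1) / 2 → colNonzero M' j) ∧
       (∀ a b : Fin m, (a : ℕ) < (m + 1) / 2 → (a : ℕ) + (b : ℕ) + 2 = m + 1 →
          rowNonzero M' a ∨ colNonzero M' b)) := by
  obtain ⟨hUT, hSE⟩ := hM'
  constructor
  · rintro ⟨M, ⟨hMUT, hrow, hcol⟩, hSD, hred⟩
    have hdual : ∀ i j : Fin m, M i j = M j.rev i.rev :=
      fun i j => congrFun (congrFun hSD i) j
    constructor
    · intro j hj
      obtain ⟨i, hi⟩ := hcol j
      have him := i.2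
      have hjm := j.2
      have hij : (i : ℕ) ≤ j := by
        by_contra h
        exact hi (hMUT i j (by omega))
      refine ⟨i, ?_⟩
      rw [← hred]
      simpa [reduced, show (i : ℕ) + (j : ℕ) + 1 ≤ m by omega] using hi
    · intro a b ha hab
      obtain ⟨j, hj⟩ := hrow a
      have ham := a.2
      have hbm := b.2
      have hjm := j.2
      have haj : (a : ℕ) ≤ j := by
        by_contra h
        exact hj (hMUT a j (by omega))
      by_cases hc : (a : ℕ) + (j : ℕ) + 1 ≤ m
      · left
        refine ⟨j, ?_⟩
        rw [← hred]
        simpa [reduced, hc] using hj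
      · right
        have hrev : a.rev = b := by
          apply Fin.ext
          simp only [Fin.val_rev]
          omega
        refine ⟨j.rev, ?_⟩
        rw [← hred]
        have h1 : (j.rev : ℕ) + (b : ℕ) + 1 ≤ m := by
          simp only [Fin.val_rev]
          omega
        have hd := hdual a j
        rw [hrev] at hd
        simp only [reduced, if_pos h1]
        rw [← hd]
        exact hj
  · rintro ⟨h1, h2⟩
    -- self-duality of the mirror completion
    have hSDm : SelfDual (mir M') := by
      funext i j
      have him := i.2
      have hjm := j.2
      simp only [mir, dual, Fin.rev_rev, Fin.val_rev]
      split_ifs with hA hB hB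
      · have e1 : j.rev = i := Fin.ext (by simp only [Fin.val_rev]; omega)
        have e2 : i.rev = j := Fin.ext (by simp only [Fin.val_rev]; omega)
        rw [e1, e2]
      · rfl
      · rfl
      · exfalso; omega
    -- key lemma: a nonzero entry in column `a.rev` of `M'` yields a nonzero
    -- entry in row `a` of the mirror completion
    have key : ∀ a : Fin m, colNonzero M' a.rev → rowNonzero (mir M') a := by
      rintro a ⟨i, hi⟩
      have ham := a.2
      have him := i.2
      have hse : (i : ℕ) + (a.rev : ℕ) + 1 ≤ m := by
        by_contra h
        exact hi (hSE _ _ (by omega))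
      have hia : (i : ℕ) ≤ a := by
        simp only [Fin.val_rev] at hse
        omega
      refine ⟨i.rev, ?_⟩
      by_cases he : (a : ℕ) + (i.rev : ℕ) + 1 ≤ m
      · have hai : a = i := by
          apply Fin.ext
          simp only [Fin.val_rev] at he
          omega
        subst hai
        simp only [mir, if_pos he]
        exact hi
      · simp only [mir, if_neg he, Fin.rev_rev]
        exact hi
    -- every row of the mirror completion is nonzero
    have hrows : ∀ a : Fin m, rowNonzero (mir M') a := by
      intro a
      have ham := a.2
      by_cases hca : (a : ℕ) < (m + 1) / 2
      · have hb : (a : ℕ) + (a.rev : ℕ) + 2 = m + 1 := by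
          simp only [Fin.val_rev]
          omega
        rcases h2 a a.rev hca hb with hR | hC
        · obtain ⟨j, hj⟩ := hR
          have hjm := j.2
          have hse : (a : ℕ) + (j : ℕ) + 1 ≤ m := by
            by_contra h
            exact hj (hSE _ _ (by omega))
          exact ⟨j, by simp only [mir, if_pos hse]; exact hj⟩
        · exact key a hC
      · have hlt : (a.rev : ℕ) < (m + 1) / 2 := by
          simp only [Fin.val_rev]
          omega
        exact key a (h1 a.rev hlt)
    -- every column of the mirror completion is nonzero (via self-duality)
    have hcols : ∀ j : Fin m, colNonzero (mir M') j := by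
      intro j
      obtain ⟨t, ht⟩ := hrows j.rev
      refine ⟨t.rev, ?_⟩
      rw [congrFun (congrFun hSDm j.rev) t] at ht
      simpa [dual, Fin.rev_rev] using ht
    refine ⟨mir M', ⟨?_, hrows, hcols⟩, hSDm, ?_⟩
    · intro i j hji
      have him := i.2
      have hjm := j.2
      simp only [mir]
      split_ifs with h
      · exact hUT i j hji
      · exact hUT j.rev i.rev (by simp only [Fin.val_rev]; omega)
    · funext i j
      simp only [reduced, mir]
      split_ifs with h
      · rfl
      · exact (hSE i j (by omega)).symm
end

section
/- Let M' be a super triangular matrix of dimension m satisfying: (i) for every 1 ≤ i ≤ ⌈m/2⌉, column i contains a nonzero entry; and (ii) for every 1 ≤ i ≤ ⌈m/2⌉, either row i or column m+1−i contains a nonzero entry. Define the m×m matrix M by M_{i,j} = M'_{i,j} whenever i+j ≤ m+1 and M_{i,j} = M'_{m+1−j,m+1−i} whenever i+j > m+1. Then M is a self-dual Fishburn matrix whose reduced matrix is M'. -/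
open Finset

/-- If `M'` is a super triangular matrix of dimension `m`
satisfying (i) and (ii), and `M` is defined by `M_{i,j} = M'_{i,j}` for
`i+j ≤ m+1` and `M_{i,j} = M'_{m+1-j,m+1-i}` for `i+j > m+1` (1-based), then
`M` is a self-dual Fishburn matrix with reduced matrix `M'`. -/
theorem stmt1 (m : ℕ) (M' M : Mat m) (hST : SuperTri M')
    (hi : ∀ j : Fin m, (j : ℕ) < (m + 1) / 2 → colNonzero M' j)
    (hii : ∀ a b : Fin m, (a : ℕ) < (m + 1) / 2 → (a : ℕ) + (b : ℕ) + 2 = m + 1 →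
      rowNonzero M' a ∨ colNonzero M' b)
    (hM : ∀ i j : Fin m,
      M i j = if (i : ℕ) + (j : ℕ) + 1 ≤ m then M' i j else M' j.rev i.rev) :
    IsFishburn M ∧ SelfDual M ∧ reduced M = M' := by
  obtain ⟨hUT', hSE⟩ := hST
  have hv : ∀ i : Fin m, (i.rev : ℕ) = m - (i + 1) := fun i => Fin.val_rev i
  have hrr : ∀ i : Fin m, i.rev.rev = i := fun i => Fin.rev_rev i
  have hUT : UT M := by
    intro i j hji
    rw [hM]
    split
    · exact hUT' i j hji
    · apply hUT'
      have := hv i; have := hv j; have := i.isLt; have := j.isLt; omega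
  have hdiag : ∀ i j : Fin m, (i : ℕ) + (j : ℕ) + 1 = m → j.rev = i ∧ i.rev = j := by
    intro i j h
    have := i.isLt; have := j.isLt
    constructor <;> (apply Fin.ext; rw [hv]; omega)
  have hsd : SelfDual M := by
    funext i j
    show M i j = M j.rev i.rev
    rw [hM, hM, hrr, hrr]
    have hi' := i.isLt; have hj' := j.isLt
    have hvi := hv i; have hvj := hv j
    rcases lt_trichotomy ((i : ℕ) + (j : ℕ) + 1) m with h | h | h
    · rw [if_pos (le_of_lt h), if_neg (by omega)]
    · obtain ⟨e1, e2⟩ := hdiag i j h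
      rw [if_pos h.le, if_pos (by omega), e1, e2]
    · rw [if_neg (by omega), if_pos (by omega)]
  have hred : reduced M = M' := by
    funext i j
    unfold reduced
    by_cases h : (i : ℕ) + (j : ℕ) + 1 ≤ m
    · rw [if_pos h, hM, if_pos h]
    · rw [if_neg h, hSE i j (by omega)]
  have hrow : ∀ i : Fin m, rowNonzero M i := by
    intro i
    have hi' := i.isLt
    have key : rowNonzero M' i ∨ colNonzero M' i.rev := by
      by_cases hik : (i : ℕ) < (m + 1) / 2
      · exact hii i i.rev hik (by rw [hv]; omega)
      · right; exact hi i.rev (by rw [hv]; omega)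
    rcases key with ⟨b, hb⟩ | ⟨a, ha⟩
    · refine ⟨b, ?_⟩
      rw [hM]
      split
      · exact hb
      · exact absurd (hSE i b (by omega)) hb
    · have hale : (a : ℕ) ≤ i := by
        by_contra h
        exact ha (hSE a i.rev (by rw [hv]; push_neg at h; have := a.isLt; omega))
      refine ⟨a.rev, ?_⟩
      rw [hM]
      have hva := hv a
      rcases eq_or_lt_of_le hale with heq | hlt
      · have hea : a = i := Fin.ext heq
        subst hea
        rw [if_pos (by omega)]
        exact ha
      · rw [if_neg (by omega), hrr]
        exact ha
  have hcol : ∀ j : Fin m, colNonzero M j := by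
    intro j
    obtain ⟨b, hb⟩ := hrow j.rev
    refine ⟨b.rev, ?_⟩
    rw [hsd]
    show M j.rev b.rev.rev ≠ 0
    rw [hrr]
    exact hb
  exact ⟨⟨hUT, hrow, hcol⟩, hsd, hred⟩
end

section
/- For every n ≥ 1 there is a bijection α between the set M(n) of self-dual Fishburn matrices of reduced size n and the set SM(n) of admissible super triangular matrices of size n, such that for every M ∈ M(n): the sum of the first row of α(M) equals the sum of the first row of M, and the sum of the center column of α(M) equals the sum of the diagonal cells of M. -/
open Finset

/-!
A self-dual matrix is determined by its entries on and above the antidiagonal, i.e. by its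
reduced matrix `R`, which is super triangular; by self-duality, column `j` of the full matrix is
nonzero iff column `j` or row `m - 1 - j` of `R` is. In odd dimension `2k + 1` this says that `R`
satisfies conditions (a), (b) of `SM(n)` and has a nonzero centre column; in even dimension `2k`,
after inserting a zero centre column, it is exactly (a), (b). So reduction is a bijection from
`M(n)` onto `SM(n)` which keeps the first row and the antidiagonal. Composing it with the involution
of `SM(n)` exchanging, in every row, the centre cell with the antidiagonal cell turns the
antidiagonal sum into the centre-column sum.

Matrices are handled as functions `ℕ → ℕ → ℕ`, extended by zero outside the square.
-/

namespace SelfDualFishburn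

variable {n m k : ℕ} {f R F : ℕ → ℕ → ℕ}

def extend {m : ℕ} (M : Mat m) (x y : ℕ) : ℕ :=
  if h : x < m ∧ y < m then M ⟨x, h.1⟩ ⟨y, h.2⟩ else 0

def toMat (m : ℕ) (f : ℕ → ℕ → ℕ) : Mat m := fun i j => f i j

@[simp]
lemma extend_apply (M : Mat m) (i j : Fin m) : extend M i j = M i j := by
  simp [extend]

lemma extend_eq_zero {x y : ℕ} (M : Mat m) (h : m ≤ x ∨ m ≤ y) : extend M x y = 0 :=
  dif_neg (by omega)

@[simp]
lemma toMat_extend (M : Mat m) : toMat m (extend M) = M := by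
  funext i j
  exact extend_apply M i j

lemma extend_toMat_of_lt {x y : ℕ} (f : ℕ → ℕ → ℕ) (hx : x < m) (hy : y < m) :
    extend (toMat m f) x y = f x y :=
  dif_pos ⟨hx, hy⟩

lemma sum_fin_fin_eq_sum_range (m : ℕ) (F : ℕ → ℕ → ℕ) :
    ∑ i : Fin m, ∑ j : Fin m, F i j = ∑ x ∈ range m, ∑ y ∈ range m, F x y := by
  rw [← Fin.sum_univ_eq_sum_range]
  exact Finset.sum_congr rfl fun i _ => Fin.sum_univ_eq_sum_range (F i) m

lemma msize_toMat (m : ℕ) (f : ℕ → ℕ → ℕ) :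
    msize (toMat m f) = ∑ x ∈ range m, ∑ y ∈ range m, f x y :=
  sum_fin_fin_eq_sum_range m f

lemma firstRowSum_toMat (m : ℕ) (f : ℕ → ℕ → ℕ) :
    firstRowSum (toMat m f) = ∑ y ∈ range m, f 0 y := by
  refine (sum_fin_fin_eq_sum_range m fun x y => if x = 0 then f x y else 0).trans ?_
  rw [Finset.sum_comm]
  refine Finset.sum_congr rfl fun y hy => ?_
  rw [mem_range] at hy
  rw [Finset.sum_eq_single 0 (fun x _ hx => if_neg hx) (by simp; omega), if_pos rfl]

lemma diagSum_toMat (m : ℕ) (f : ℕ → ℕ → ℕ) :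
    diagSum (toMat m f) = ∑ x ∈ range m, f x (m - 1 - x) := by
  refine (sum_fin_fin_eq_sum_range m fun x y => if x + y + 1 = m then f x y else 0).trans ?_
  refine Finset.sum_congr rfl fun x hx => ?_
  rw [mem_range] at hx
  rw [Finset.sum_eq_single (m - 1 - x) (fun y _ hy => if_neg (by omega)) (by simp; omega),
    if_pos (by omega)]

lemma centerColSum_toMat (k : ℕ) (f : ℕ → ℕ → ℕ) :
    centerColSum (toMat (2 * k + 1) f) = ∑ x ∈ range (2 * k + 1), f x k := by
  refine (sum_fin_fin_eq_sum_range _ fun x y => if 2 * y + 1 = 2 * k + 1 then f x y else 0).trans ?_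
  refine Finset.sum_congr rfl fun x _ => ?_
  rw [Finset.sum_eq_single k (fun y _ hy => if_neg (by omega)) (by simp; omega), if_pos rfl]

/-- This forces `f` to vanish outside the `m × m` square. -/
def IsSuperTri (m : ℕ) (f : ℕ → ℕ → ℕ) : Prop := ∀ x y, y < x ∨ m ≤ x + y → f x y = 0

def RowNonzero (f : ℕ → ℕ → ℕ) (x : ℕ) : Prop := ∃ y, f x y ≠ 0

def ColNonzero (f : ℕ → ℕ → ℕ) (y : ℕ) : Prop := ∃ x, f x y ≠ 0

namespace IsSuperTri

lemma le_of_ne_zero (hf : IsSuperTri m f) {x y : ℕ} (h : f x y ≠ 0) : x ≤ y ∧ x + y < m := by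
  by_contra h'
  exact h (hf x y (by omega))

lemma extend_toMat (hf : IsSuperTri m f) : extend (toMat m f) = f := by
  funext x y
  by_cases h : x < m ∧ y < m
  · exact extend_toMat_of_lt f h.1 h.2
  · rw [extend_eq_zero _ (by omega), hf x y (by omega)]

lemma superTri_toMat (hf : IsSuperTri m f) : SuperTri (toMat m f) :=
  ⟨fun i j h => hf i j (.inl h), fun i j h => hf i j (.inr (by omega))⟩

end IsSuperTri

lemma isSuperTri_extend {M : Mat m} (hM : SuperTri M) : IsSuperTri m (extend M) := by
  intro x y h
  by_cases hxy : x < m ∧ y < m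
  · rw [extend, dif_pos hxy]
    rcases h with h | h
    · exact hM.1 _ _ h
    · exact hM.2 _ _ (by simp only; omega)
  · exact extend_eq_zero M (by omega)

lemma rowNonzero_iff_extend {M : Mat m} (i : Fin m) : rowNonzero M i ↔ RowNonzero (extend M) i := by
  refine ⟨fun ⟨j, hj⟩ => ⟨j, by rwa [extend_apply]⟩, fun ⟨y, hy⟩ => ?_⟩
  by_cases h : y < m
  · exact ⟨⟨y, h⟩, by simpa [extend, h] using hy⟩
  · exact absurd (extend_eq_zero M (.inr (by omega))) hy

lemma colNonzero_iff_extend {M : Mat m} (j : Fin m) : colNonzero M j ↔ ColNonzero (extend M) j := by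
  refine ⟨fun ⟨i, hi⟩ => ⟨i, by rwa [extend_apply]⟩, fun ⟨x, hx⟩ => ?_⟩
  by_cases h : x < m
  · exact ⟨⟨x, h⟩, by simpa [extend, h] using hx⟩
  · exact absurd (extend_eq_zero M (.inl (by omega))) hx

lemma sum_row_eq_zero_of_ge (hf : IsSuperTri m f) {x : ℕ} (hx : m ≤ x) (s : Finset ℕ) :
    ∑ y ∈ s, f x y = 0 :=
  Finset.sum_eq_zero fun y _ => hf x y (.inr (by omega))

def reduce (m : ℕ) (f : ℕ → ℕ → ℕ) (x y : ℕ) : ℕ := if x + y < m then f x y else 0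

def selfDualOf (m : ℕ) (R : ℕ → ℕ → ℕ) (x y : ℕ) : ℕ :=
  if x + y < m then R x y else R (m - 1 - y) (m - 1 - x)

def IsFishburnReduced (m : ℕ) (R : ℕ → ℕ → ℕ) : Prop :=
  ∀ j < m, ColNonzero R j ∨ RowNonzero R (m - 1 - j)

lemma selfDualOf_of_lt {x y : ℕ} (h : x + y < m) : selfDualOf m R x y = R x y := if_pos h

lemma selfDualOf_symm {x y : ℕ} (hx : x < m) (hy : y < m) :
    selfDualOf m R x y = selfDualOf m R (m - 1 - y) (m - 1 - x) := by
  unfold selfDualOf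
  split_ifs <;> first | rfl | omega | (congr 1 <;> omega)

lemma selfDual_toMat_selfDualOf : SelfDual (toMat m (selfDualOf m R)) := by
  funext i j
  refine (selfDualOf_symm i.isLt j.isLt).trans ?_
  simp only [dual, toMat, Fin.val_rev]
  congr 1 <;> omega

lemma ut_toMat_selfDualOf (hR : IsSuperTri m R) : UT (toMat m (selfDualOf m R)) := by
  intro i j h
  simp only [toMat, selfDualOf]
  split_ifs <;> exact hR _ _ (.inl (by omega))

lemma rowNonzero_of_selfDual {M : Mat m} (hM : SelfDual M) {i : Fin m}
    (h : colNonzero M i.rev) : rowNonzero M i := by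
  obtain ⟨x, hx⟩ := h
  refine ⟨x.rev, ?_⟩
  rw [hM]
  simpa [dual] using hx

lemma colNonzero_toMat_selfDualOf_iff (hR : IsSuperTri m R) (j : Fin m) :
    colNonzero (toMat m (selfDualOf m R)) j ↔ ColNonzero R j ∨ RowNonzero R (m - 1 - j) := by
  constructor
  · rintro ⟨x, hx⟩
    simp only [toMat, selfDualOf] at hx
    split_ifs at hx
    · exact .inl ⟨x, hx⟩
    · exact .inr ⟨_, hx⟩
  · rintro (⟨x, hx⟩ | ⟨y, hy⟩)
    · have := hR.le_of_ne_zero hx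
      exact ⟨⟨x, by omega⟩, by simpa [toMat, selfDualOf_of_lt this.2] using hx⟩
    · -- the entry of `R` in row `m - 1 - j` reappears in column `j` by self-duality
      have := hR.le_of_ne_zero hy
      refine ⟨⟨m - 1 - y, by omega⟩, ?_⟩
      simp only [toMat]
      rw [selfDualOf_symm (by omega) j.isLt, selfDualOf_of_lt (by omega),
        show m - 1 - (m - 1 - y) = y by omega]
      exact hy

lemma isFishburn_toMat_selfDualOf_iff (hR : IsSuperTri m R) :
    IsFishburn (toMat m (selfDualOf m R)) ↔ IsFishburnReduced m R := by
  have hcols : (∀ j, colNonzero (toMat m (selfDualOf m R)) j) ↔ IsFishburnReduced m R := by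
    simp only [colNonzero_toMat_selfDualOf_iff hR, IsFishburnReduced, Fin.forall_iff]
  rw [← hcols]
  exact ⟨fun h => h.2.2, fun h => ⟨ut_toMat_selfDualOf hR,
    fun i => rowNonzero_of_selfDual selfDual_toMat_selfDualOf (h i.rev), h⟩⟩

lemma reducedSize_toMat_selfDualOf (hR : IsSuperTri m R) :
    reducedSize (toMat m (selfDualOf m R)) = msize (toMat m R) := by
  refine (sum_fin_fin_eq_sum_range m fun x y =>
    if x + y + 1 ≤ m then selfDualOf m R x y else 0).trans ?_
  rw [msize_toMat]
  refine Finset.sum_congr rfl fun x _ => Finset.sum_congr rfl fun y _ => ?_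
  split_ifs with h
  · exact selfDualOf_of_lt (by omega)
  · exact (hR x y (.inr (by omega))).symm

lemma isSuperTri_reduce_extend {M : Mat m} (hM : UT M) : IsSuperTri m (reduce m (extend M)) := by
  intro x y h
  unfold reduce
  split_ifs with hxy
  · rw [extend, dif_pos (by omega)]
    exact hM _ _ (by simp only; omega)
  · rfl

lemma eq_toMat_selfDualOf_reduce {M : Mat m} (hSD : SelfDual M) :
    M = toMat m (selfDualOf m (reduce m (extend M))) := by
  funext i j
  simp only [toMat, selfDualOf, reduce]
  split_ifs with h h'
  · exact (extend_apply M i j).symm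
  · rw [hSD]
    simp only [dual, ← extend_apply, Fin.val_rev]
    congr 1 <;> omega
  · omega

lemma reduce_extend_toMat_selfDualOf (hR : IsSuperTri m R) :
    reduce m (extend (toMat m (selfDualOf m R))) = R := by
  funext x y
  unfold reduce
  split_ifs with h
  · rw [extend_toMat_of_lt _ (by omega) (by omega), selfDualOf_of_lt h]
  · exact (hR x y (.inr (by omega))).symm

theorem mem_Mset_iff {A : SMat} :
    A ∈ Mset n ↔ ∃ m R, IsSuperTri m R ∧ IsFishburnReduced m R ∧ msize (toMat m R) = n ∧
      A = ⟨m, toMat m (selfDualOf m R)⟩ := by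
  constructor
  · obtain ⟨m, M⟩ := A
    rintro ⟨hF, hSD, hsize⟩
    have hR := isSuperTri_reduce_extend hF.1
    have hM := eq_toMat_selfDualOf_reduce hSD
    refine ⟨m, _, hR, ?_, ?_, Sigma.ext rfl (heq_of_eq hM)⟩
    · rw [← isFishburn_toMat_selfDualOf_iff hR, ← hM]
      exact hF
    · rw [← reducedSize_toMat_selfDualOf hR, ← hM]
      exact hsize
  · rintro ⟨m, R, hR, hFR, hsize, rfl⟩
    exact ⟨(isFishburn_toMat_selfDualOf_iff hR).2 hFR, selfDual_toMat_selfDualOf,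
      (reducedSize_toMat_selfDualOf hR).trans hsize⟩

def Admissible (k : ℕ) (T : ℕ → ℕ → ℕ) : Prop :=
  (∀ j < k, ColNonzero T j) ∧ ∀ a < k, RowNonzero T a ∨ ColNonzero T (2 * k - a)

lemma IsSuperTri.two_mul_lt_of_rowNonzero (hf : IsSuperTri m f) {x : ℕ}
    (h : RowNonzero f x) : 2 * x < m := by
  obtain ⟨y, hy⟩ := h
  have := hf.le_of_ne_zero hy
  omega

theorem mem_SMset_iff {B : SMat} :
    B ∈ SMset n ↔ ∃ k F, IsSuperTri (2 * k + 1) F ∧ Admissible k F ∧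
      msize (toMat (2 * k + 1) F) = n ∧ B = ⟨2 * k + 1, toMat (2 * k + 1) F⟩ := by
  constructor
  · obtain ⟨m, M⟩ := B
    rintro ⟨hST, hsize, k, rfl, hcol, hrowcol⟩
    dsimp only at hST hsize hcol hrowcol
    refine ⟨k, extend M, isSuperTri_extend hST, ⟨fun j hj => ?_, fun a ha => ?_⟩, by simpa,
      by simp⟩
    · exact (colNonzero_iff_extend ⟨j, by omega⟩).1 (hcol _ hj)
    · exact (hrowcol ⟨a, by omega⟩ ⟨2 * k - a, by omega⟩ ha (by simp only; omega)).imp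
        (rowNonzero_iff_extend _).1 (colNonzero_iff_extend _).1
  · rintro ⟨k, F, hF, ⟨hcol, hrowcol⟩, hsize, rfl⟩
    simp only [SMset, Set.mem_ofPred_eq, rowNonzero_iff_extend, colNonzero_iff_extend,
      hF.extend_toMat]
    refine ⟨hF.superTri_toMat, hsize, k, rfl, fun j hj => hcol j hj, fun a b ha hab => ?_⟩
    rw [show (b : ℕ) = 2 * k - a by omega]
    exact hrowcol a ha

def insertZeroCol (k : ℕ) (f : ℕ → ℕ → ℕ) (x y : ℕ) : ℕ :=
  if y < k then f x y else if y = k then 0 else f x (y - 1)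

def eraseCol (k : ℕ) (f : ℕ → ℕ → ℕ) (x y : ℕ) : ℕ := if y < k then f x y else f x (y + 1)

@[simp]
lemma insertZeroCol_self (x : ℕ) : insertZeroCol k f x k = 0 := by
  simp [insertZeroCol]

@[simp]
lemma eraseCol_insertZeroCol : eraseCol k (insertZeroCol k f) = f := by
  funext x y
  simp only [eraseCol, insertZeroCol]
  split_ifs <;> first | rfl | omega

lemma insertZeroCol_eraseCol (hf : ∀ x, f x k = 0) : insertZeroCol k (eraseCol k f) = f := by
  funext x y
  simp only [eraseCol, insertZeroCol]
  split_ifs <;> first | rfl | omega | (congr 1; omega) | (subst y; exact (hf x).symm)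

lemma IsSuperTri.insertZeroCol (hf : IsSuperTri (2 * k) f) :
    IsSuperTri (2 * k + 1) (insertZeroCol k f) := by
  intro x y h
  simp only [SelfDualFishburn.insertZeroCol]
  split_ifs <;> first | rfl | exact hf _ _ (by omega)

lemma IsSuperTri.eraseCol (hf : IsSuperTri (2 * k + 1) f) :
    IsSuperTri (2 * k) (eraseCol k f) := by
  -- the antidiagonal cells left of the centre lie below the diagonal
  intro x y h
  simp only [SelfDualFishburn.eraseCol]
  split_ifs <;> exact hf _ _ (by omega)

lemma sum_insertZeroCol {N : ℕ} (hk : k ≤ N) (x : ℕ) :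
    ∑ y ∈ range (N + 1), insertZeroCol k f x y = ∑ y ∈ range N, f x y := by
  induction N, hk using Nat.le_induction with
  | base =>
    rw [sum_range_succ, insertZeroCol_self, add_zero]
    exact Finset.sum_congr rfl fun y hy => if_pos (mem_range.1 hy)
  | succ N hkN ih =>
    rw [sum_range_succ, ih, sum_range_succ, insertZeroCol, if_neg (by omega), if_neg (by omega),
      Nat.add_sub_cancel]

lemma msize_toMat_insertZeroCol (hf : IsSuperTri (2 * k) f) :
    msize (toMat (2 * k + 1) (insertZeroCol k f)) = msize (toMat (2 * k) f) := by
  simp only [msize_toMat, sum_insertZeroCol (show k ≤ 2 * k by omega), sum_range_succ,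
    sum_row_eq_zero_of_ge hf le_rfl, add_zero]

lemma rowNonzero_insertZeroCol_iff {x : ℕ} :
    RowNonzero (insertZeroCol k f) x ↔ RowNonzero f x := by
  constructor
  · rintro ⟨y, hy⟩
    simp only [insertZeroCol] at hy
    split_ifs at hy
    exacts [⟨y, hy⟩, absurd rfl hy, ⟨y - 1, hy⟩]
  · rintro ⟨y, hy⟩
    rcases lt_or_ge y k with h | h
    · exact ⟨y, by rwa [insertZeroCol, if_pos h]⟩
    · refine ⟨y + 1, ?_⟩
      rwa [insertZeroCol, if_neg (by omega), if_neg (by omega), Nat.add_sub_cancel]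

lemma colNonzero_insertZeroCol_of_lt {j : ℕ} (hj : j < k) :
    ColNonzero (insertZeroCol k f) j ↔ ColNonzero f j := by
  simp only [ColNonzero, insertZeroCol, if_pos hj]

lemma colNonzero_insertZeroCol_of_le {j : ℕ} (hj : k ≤ j) :
    ColNonzero (insertZeroCol k f) (j + 1) ↔ ColNonzero f j := by
  simp only [ColNonzero, insertZeroCol, if_neg (show ¬ j + 1 < k by omega),
    if_neg (show j + 1 ≠ k by omega), Nat.add_sub_cancel]

lemma isFishburnReduced_even_iff (hf : IsSuperTri (2 * k) f) :
    IsFishburnReduced (2 * k) f ↔ Admissible k (insertZeroCol k f) := by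
  constructor
  · intro h
    refine ⟨fun j hj => ?_, fun a ha => ?_⟩
    · rw [colNonzero_insertZeroCol_of_lt hj]
      exact (h j (by omega)).resolve_right fun hr =>
        absurd (hf.two_mul_lt_of_rowNonzero hr) (by omega)
    · rw [rowNonzero_insertZeroCol_iff, show 2 * k - a = 2 * k - 1 - a + 1 by omega,
        colNonzero_insertZeroCol_of_le (by omega)]
      have := h (2 * k - 1 - a) (by omega)
      rwa [show 2 * k - 1 - (2 * k - 1 - a) = a by omega, or_comm] at this
  · rintro ⟨hcol, hrowcol⟩ j hj
    rcases lt_or_ge j k with hjk | hjk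
    · exact .inl ((colNonzero_insertZeroCol_of_lt hjk).1 (hcol j hjk))
    · have := hrowcol (2 * k - 1 - j) (by omega)
      rwa [rowNonzero_insertZeroCol_iff, show 2 * k - (2 * k - 1 - j) = j + 1 by omega,
        colNonzero_insertZeroCol_of_le hjk, or_comm] at this

lemma isFishburnReduced_odd_iff (hf : IsSuperTri (2 * k + 1) f) :
    IsFishburnReduced (2 * k + 1) f ↔ Admissible k f ∧ ColNonzero f k := by
  constructor
  · intro h
    refine ⟨⟨fun j hj => ?_, fun a ha => ?_⟩, ?_⟩
    · exact (h j (by omega)).resolve_right fun hr =>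
        absurd (hf.two_mul_lt_of_rowNonzero hr) (by omega)
    · have := h (2 * k - a) (by omega)
      rwa [show 2 * k + 1 - 1 - (2 * k - a) = a by omega, or_comm] at this
    · -- the only cell of row `k` outside the SE-region is the central one
      have hk := h k (by omega)
      rw [show 2 * k + 1 - 1 - k = k by omega] at hk
      refine hk.elim id fun ⟨y, hy⟩ => ⟨k, ?_⟩
      have := hf.le_of_ne_zero hy
      rwa [show y = k by omega] at hy
  · rintro ⟨⟨hcol, hrowcol⟩, hcenter⟩ j hj
    rcases lt_trichotomy j k with hjk | rfl | hjk
    · exact .inl (hcol j hjk)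
    · exact .inl hcenter
    · have := hrowcol (2 * k - j) (by omega)
      rw [show 2 * k - (2 * k - j) = j by omega] at this
      rw [show 2 * k + 1 - 1 - j = 2 * k - j by omega]
      exact this.symm

def swapCenterCol (k : ℕ) (f : ℕ → ℕ → ℕ) (x y : ℕ) : ℕ := f x (Equiv.swap k (2 * k - x) y)

@[simp]
lemma swapCenterCol_swapCenterCol : swapCenterCol k (swapCenterCol k f) = f := by
  funext x y
  simp [swapCenterCol]

lemma swapCenterCol_center (x : ℕ) : swapCenterCol k f x k = f x (2 * k - x) :=
  congrArg (f x) (Equiv.swap_apply_left _ _)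

lemma swapCenterCol_of_ne {x y : ℕ} (hk : y ≠ k) (hx : y ≠ 2 * k - x) :
    swapCenterCol k f x y = f x y :=
  congrArg (f x) (Equiv.swap_apply_of_ne_of_ne hk hx)

lemma sum_swapCenterCol (x : ℕ) :
    ∑ y ∈ range (2 * k + 1), swapCenterCol k f x y = ∑ y ∈ range (2 * k + 1), f x y := by
  refine Equiv.Perm.sum_comp _ _ (f x) fun y hy => ?_
  by_contra hy'
  exact hy (Equiv.swap_apply_of_ne_of_ne (by simp at hy'; omega) (by simp at hy'; omega))

lemma msize_toMat_swapCenterCol :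
    msize (toMat (2 * k + 1) (swapCenterCol k f)) = msize (toMat (2 * k + 1) f) := by
  simp only [msize_toMat, sum_swapCenterCol]

lemma IsSuperTri.swapCenterCol (hf : IsSuperTri (2 * k + 1) f) :
    IsSuperTri (2 * k + 1) (swapCenterCol k f) := by
  intro x y h
  simp only [SelfDualFishburn.swapCenterCol, Equiv.swap_apply_def]
  split_ifs <;> exact hf _ _ (by omega)

lemma swapCenterCol_of_lt (hf : IsSuperTri (2 * k + 1) f) {x y : ℕ} (hy : y < k) :
    swapCenterCol k f x y = f x y := by
  simp only [swapCenterCol, Equiv.swap_apply_def]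
  split_ifs <;> first | rfl | omega | rw [hf _ _ (by omega), hf _ _ (by omega)]

lemma Admissible.swapCenterCol (hf : IsSuperTri (2 * k + 1) f) (hadm : Admissible k f) :
    Admissible k (swapCenterCol k f) := by
  obtain ⟨hcol, hrowcol⟩ := hadm
  refine ⟨fun j hj => ?_, fun a ha => ?_⟩
  · obtain ⟨x, hx⟩ := hcol j hj
    exact ⟨x, by rwa [swapCenterCol_of_lt hf hj]⟩
  · rcases hrowcol a ha with ⟨y, hy⟩ | ⟨x, hx⟩
    · refine .inl ⟨Equiv.swap k (2 * k - a) y, ?_⟩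
      simpa [SelfDualFishburn.swapCenterCol] using hy
    · by_cases hxa : x = a
      · subst hxa
        exact .inl ⟨k, by rwa [swapCenterCol_center]⟩
      · exact .inr ⟨x, by rwa [swapCenterCol_of_ne (by omega) (by omega)]⟩

lemma firstRowSum_toMat_selfDualOf :
    firstRowSum (toMat m (selfDualOf m R)) = firstRowSum (toMat m R) := by
  simp only [firstRowSum_toMat]
  exact Finset.sum_congr rfl fun y hy => selfDualOf_of_lt (by simp at hy; omega)

lemma diagSum_toMat_selfDualOf : diagSum (toMat m (selfDualOf m R)) = diagSum (toMat m R) := by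
  simp only [diagSum_toMat]
  exact Finset.sum_congr rfl fun x hx => selfDualOf_of_lt (by simp at hx; omega)

lemma firstRowSum_toMat_insertZeroCol :
    firstRowSum (toMat (2 * k + 1) (insertZeroCol k R)) = firstRowSum (toMat (2 * k) R) := by
  simp only [firstRowSum_toMat, sum_insertZeroCol (show k ≤ 2 * k by omega)]

lemma diagSum_toMat_insertZeroCol (hR : IsSuperTri (2 * k) R) :
    diagSum (toMat (2 * k + 1) (insertZeroCol k R)) = diagSum (toMat (2 * k) R) := by
  have hlast : insertZeroCol k R (2 * k) 0 = 0 := by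
    unfold insertZeroCol
    split_ifs <;> first | rfl | exact hR _ _ (.inr (by omega))
  simp only [diagSum_toMat, sum_range_succ _ (2 * k), Nat.add_sub_cancel, Nat.sub_self, hlast,
    add_zero]
  refine Finset.sum_congr rfl fun x hx => ?_
  rw [mem_range] at hx
  rcases lt_trichotomy x k with h | rfl | h
  · rw [insertZeroCol, if_neg (by omega), if_neg (by omega)]
    congr 1
    omega
  · rw [show 2 * x - x = x by omega, insertZeroCol_self, hR _ _ (.inl (by omega))]
  · rw [insertZeroCol, if_pos (by omega), hR _ _ (.inr (by omega)), hR _ _ (.inl (by omega))]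

lemma centerColSum_toMat_eq_zero_iff (hF : IsSuperTri (2 * k + 1) F) :
    centerColSum (toMat (2 * k + 1) F) = 0 ↔ ¬ ColNonzero F k := by
  rw [centerColSum_toMat, Finset.sum_eq_zero_iff, ColNonzero, not_exists]
  refine ⟨fun h x => ?_, fun h x _ => not_not.1 (h x)⟩
  by_cases hx : x < 2 * k + 1
  · exact not_not.2 (h x (mem_range.2 hx))
  · exact not_not.2 (hF x k (.inr (by omega)))

def toSuperTri (A : SMat) : SMat :=
  if Even A.1 then ⟨A.1 + 1, toMat _ (insertZeroCol (A.1 / 2) (reduce A.1 (extend A.2)))⟩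
  else ⟨A.1, toMat _ (reduce A.1 (extend A.2))⟩

def ofSuperTri (B : SMat) : SMat :=
  if centerColSum B.2 = 0 then
    ⟨B.1 - 1, toMat _ (selfDualOf (B.1 - 1) (eraseCol (B.1 / 2) (extend B.2)))⟩
  else ⟨B.1, toMat _ (selfDualOf B.1 (extend B.2))⟩

lemma toSuperTri_even (hR : IsSuperTri (2 * k) R) :
    toSuperTri ⟨2 * k, toMat (2 * k) (selfDualOf (2 * k) R)⟩ =
      ⟨2 * k + 1, toMat (2 * k + 1) (insertZeroCol k R)⟩ := by
  simp only [toSuperTri, even_two_mul, if_true, reduce_extend_toMat_selfDualOf hR,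
    Nat.mul_div_cancel_left k two_pos]

lemma toSuperTri_odd (hR : IsSuperTri (2 * k + 1) R) :
    toSuperTri ⟨2 * k + 1, toMat (2 * k + 1) (selfDualOf (2 * k + 1) R)⟩ =
      ⟨2 * k + 1, toMat (2 * k + 1) R⟩ := by
  simp only [toSuperTri, Nat.not_even_two_mul_add_one, if_false, reduce_extend_toMat_selfDualOf hR]

lemma ofSuperTri_of_colNonzero (hF : IsSuperTri (2 * k + 1) F) (hc : ColNonzero F k) :
    ofSuperTri ⟨2 * k + 1, toMat (2 * k + 1) F⟩ =
      ⟨2 * k + 1, toMat (2 * k + 1) (selfDualOf (2 * k + 1) F)⟩ := by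
  rw [ofSuperTri, if_neg (fun h => (centerColSum_toMat_eq_zero_iff hF).1 h hc), hF.extend_toMat]

lemma ofSuperTri_of_not_colNonzero (hF : IsSuperTri (2 * k + 1) F) (hc : ¬ ColNonzero F k) :
    ofSuperTri ⟨2 * k + 1, toMat (2 * k + 1) F⟩ =
      ⟨2 * k, toMat (2 * k) (selfDualOf (2 * k) (eraseCol k F))⟩ := by
  rw [ofSuperTri, if_pos ((centerColSum_toMat_eq_zero_iff hF).2 hc), hF.extend_toMat,
    show (2 * k + 1) / 2 = k by omega]
  rfl

lemma mapsTo_toSuperTri : Set.MapsTo toSuperTri (Mset n) (SMset n) := by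
  intro A hA
  obtain ⟨m, R, hR, hFR, hsize, rfl⟩ := mem_Mset_iff.1 hA
  rw [mem_SMset_iff]
  obtain ⟨k, rfl | rfl⟩ := Nat.even_or_odd' m
  · rw [toSuperTri_even hR]
    exact ⟨k, _, hR.insertZeroCol, (isFishburnReduced_even_iff hR).1 hFR,
      (msize_toMat_insertZeroCol hR).trans hsize, rfl⟩
  · rw [toSuperTri_odd hR]
    exact ⟨k, R, hR, ((isFishburnReduced_odd_iff hR).1 hFR).1, hsize, rfl⟩

lemma mapsTo_ofSuperTri : Set.MapsTo ofSuperTri (SMset n) (Mset n) := by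
  intro B hB
  obtain ⟨k, F, hF, hadm, hsize, rfl⟩ := mem_SMset_iff.1 hB
  rw [mem_Mset_iff]
  by_cases hc : ColNonzero F k
  · rw [ofSuperTri_of_colNonzero hF hc]
    exact ⟨_, F, hF, (isFishburnReduced_odd_iff hF).2 ⟨hadm, hc⟩, hsize, rfl⟩
  · have hc' : ∀ x, F x k = 0 := fun x => not_not.1 fun h => hc ⟨x, h⟩
    have hE := hF.eraseCol
    rw [ofSuperTri_of_not_colNonzero hF hc]
    refine ⟨_, _, hE, (isFishburnReduced_even_iff hE).2 ?_, ?_, rfl⟩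
    · rwa [insertZeroCol_eraseCol hc']
    · rwa [← msize_toMat_insertZeroCol hE, insertZeroCol_eraseCol hc']

lemma leftInvOn_ofSuperTri_toSuperTri : Set.LeftInvOn ofSuperTri toSuperTri (Mset n) := by
  intro A hA
  obtain ⟨m, R, hR, hFR, -, rfl⟩ := mem_Mset_iff.1 hA
  obtain ⟨k, rfl | rfl⟩ := Nat.even_or_odd' m
  · rw [toSuperTri_even hR, ofSuperTri_of_not_colNonzero hR.insertZeroCol
      (fun ⟨x, hx⟩ => hx (insertZeroCol_self x)), eraseCol_insertZeroCol]
  · rw [toSuperTri_odd hR, ofSuperTri_of_colNonzero hR ((isFishburnReduced_odd_iff hR).1 hFR).2]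

lemma leftInvOn_toSuperTri_ofSuperTri : Set.LeftInvOn toSuperTri ofSuperTri (SMset n) := by
  intro B hB
  obtain ⟨k, F, hF, -, -, rfl⟩ := mem_SMset_iff.1 hB
  by_cases hc : ColNonzero F k
  · rw [ofSuperTri_of_colNonzero hF hc, toSuperTri_odd hF]
  · rw [ofSuperTri_of_not_colNonzero hF hc, toSuperTri_even hF.eraseCol,
      insertZeroCol_eraseCol fun x => not_not.1 fun h => hc ⟨x, h⟩]

theorem bijOn_toSuperTri : Set.BijOn toSuperTri (Mset n) (SMset n) :=
  Set.InvOn.bijOn ⟨leftInvOn_ofSuperTri_toSuperTri, leftInvOn_toSuperTri_ofSuperTri⟩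
    mapsTo_toSuperTri mapsTo_ofSuperTri

lemma firstRowSum_toSuperTri {A : SMat} (hA : A ∈ Mset n) :
    firstRowSum (toSuperTri A).2 = firstRowSum A.2 := by
  obtain ⟨m, R, hR, -, -, rfl⟩ := mem_Mset_iff.1 hA
  rw [firstRowSum_toMat_selfDualOf]
  obtain ⟨k, rfl | rfl⟩ := Nat.even_or_odd' m
  · rw [toSuperTri_even hR, firstRowSum_toMat_insertZeroCol]
  · rw [toSuperTri_odd hR]

lemma diagSum_toSuperTri {A : SMat} (hA : A ∈ Mset n) :
    diagSum (toSuperTri A).2 = diagSum A.2 := by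
  obtain ⟨m, R, hR, -, -, rfl⟩ := mem_Mset_iff.1 hA
  rw [diagSum_toMat_selfDualOf]
  obtain ⟨k, rfl | rfl⟩ := Nat.even_or_odd' m
  · rw [toSuperTri_even hR, diagSum_toMat_insertZeroCol hR]
  · rw [toSuperTri_odd hR]

def swapCenter (B : SMat) : SMat := ⟨B.1, toMat B.1 (swapCenterCol (B.1 / 2) (extend B.2))⟩

lemma swapCenter_toMat (hF : IsSuperTri (2 * k + 1) F) :
    swapCenter ⟨2 * k + 1, toMat (2 * k + 1) F⟩ =
      ⟨2 * k + 1, toMat (2 * k + 1) (swapCenterCol k F)⟩ := by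
  rw [swapCenter, hF.extend_toMat, show (2 * k + 1) / 2 = k by omega]

lemma mapsTo_swapCenter : Set.MapsTo swapCenter (SMset n) (SMset n) := by
  intro B hB
  obtain ⟨k, F, hF, hadm, hsize, rfl⟩ := mem_SMset_iff.1 hB
  rw [swapCenter_toMat hF]
  exact mem_SMset_iff.2 ⟨k, _, hF.swapCenterCol, hadm.swapCenterCol hF,
    msize_toMat_swapCenterCol.trans hsize, rfl⟩

lemma leftInvOn_swapCenter : Set.LeftInvOn swapCenter swapCenter (SMset n) := by
  intro B hB
  obtain ⟨k, F, hF, -, -, rfl⟩ := mem_SMset_iff.1 hB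
  rw [swapCenter_toMat hF, swapCenter_toMat hF.swapCenterCol, swapCenterCol_swapCenterCol]

theorem bijOn_swapCenter : Set.BijOn swapCenter (SMset n) (SMset n) :=
  Set.InvOn.bijOn ⟨leftInvOn_swapCenter, leftInvOn_swapCenter⟩ mapsTo_swapCenter mapsTo_swapCenter

lemma firstRowSum_swapCenter {B : SMat} (hB : B ∈ SMset n) :
    firstRowSum (swapCenter B).2 = firstRowSum B.2 := by
  obtain ⟨k, F, hF, -, -, rfl⟩ := mem_SMset_iff.1 hB
  rw [swapCenter_toMat hF, firstRowSum_toMat, firstRowSum_toMat, sum_swapCenterCol]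

lemma centerColSum_swapCenter {B : SMat} (hB : B ∈ SMset n) :
    centerColSum (swapCenter B).2 = diagSum B.2 := by
  obtain ⟨k, F, hF, -, -, rfl⟩ := mem_SMset_iff.1 hB
  rw [swapCenter_toMat hF, centerColSum_toMat, diagSum_toMat]
  exact Finset.sum_congr rfl fun x _ => swapCenterCol_center x

end SelfDualFishburn

theorem stmt2_general (n : ℕ) :
    ∃ α : SMat → SMat, Set.BijOn α (Mset n) (SMset n) ∧
      ∀ A ∈ Mset n, firstRowSum (α A).2 = firstRowSum A.2 ∧
        centerColSum (α A).2 = diagSum A.2 := by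
  open SelfDualFishburn in
  refine ⟨swapCenter ∘ toSuperTri, bijOn_swapCenter.comp bijOn_toSuperTri, fun A hA => ?_⟩
  have hB := bijOn_toSuperTri.mapsTo hA
  exact ⟨(firstRowSum_swapCenter hB).trans (firstRowSum_toSuperTri hA),
    (centerColSum_swapCenter hB).trans (diagSum_toSuperTri hA)⟩

/-- For `n ≥ 1` there is a bijection `α` between `M(n)` and `SM(n)`
preserving the sum of the first row and carrying the sum of the diagonal cells
to the sum of the center column. -/
theorem stmt2 (n : ℕ) (hn : 1 ≤ n) :
    ∃ α : SMat → SMat, Set.BijOn α (Mset n) (SMset n) ∧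
      ∀ A ∈ Mset n, firstRowSum (α A).2 = firstRowSum A.2 ∧
        centerColSum (α A).2 = diagSum A.2 :=
  stmt2_general n
end

section
/- For all n ≥ 1, k ≥ 0 and p ≥ 0, the number of self-dual Fishburn matrices of reduced size n whose first row has sum k and whose diagonal cells have sum p equals the number of matrices in SM(n) whose first row has sum k and whose center column has sum p; that is, |M(n,k,p)| = |SM(n,k,p)|. -/
open Finset

/-!
A self-dual matrix is determined by its NW and diagonal cells, so a matrix of `M(n,k,p)` of
dimension `m` can be encoded by its reduced matrix, which has size `n`. Put `K = m / 2`; when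
`m` is even, insert an empty column in the middle so that the dimension becomes `2K + 1`. In
each row `i` exchange the entries of the center column `K` and of the diagonal cell
`(i, 2K - i)`: the diagonal cells now fill the center column, the first row keeps its sum, the
result is super triangular, and the Fishburn conditions on columns `< K` and on the mirrored
pairs of rows and columns become conditions (a) and (b) of `SM(n)`. Conversely, the antidiagonal
of the image is zero exactly when an empty column was inserted, which recovers the parity of `m`
and makes the construction invertible.
-/

section Entries

variable {m : ℕ}

-- Matrices of different dimensions are compared through their entries, read as arrays
-- `ℕ → ℕ → ℕ` that vanish outside the matrix.
def entry (M : Mat m) (i j : ℕ) : ℕ :=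
  if h : i < m ∧ j < m then M ⟨i, h.1⟩ ⟨j, h.2⟩ else 0

lemma entry_of_lt (M : Mat m) {i j : ℕ} (hi : i < m) (hj : j < m) :
    entry M i j = M ⟨i, hi⟩ ⟨j, hj⟩ := by
  simp [entry, hi, hj]

@[simp] lemma entry_val (M : Mat m) (i j : Fin m) : entry M i j = M i j :=
  entry_of_lt M i.isLt j.isLt

lemma entry_eq_zero_of_not_lt (M : Mat m) {i j : ℕ} (h : ¬ (i < m ∧ j < m)) :
    entry M i j = 0 :=
  dif_neg h

lemma lt_of_entry_ne_zero {M : Mat m} {i j : ℕ} (h : entry M i j ≠ 0) : i < m ∧ j < m := by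
  by_contra hc
  exact h (entry_eq_zero_of_not_lt M hc)

lemma SMat.ext_entry {A B : SMat} (hd : A.1 = B.1) (h : entry A.2 = entry B.2) : A = B := by
  obtain ⟨m, M⟩ := A
  obtain ⟨d, N⟩ := B
  obtain rfl : m = d := hd
  congr
  funext i j
  simpa using congrFun (congrFun h i) j

lemma rowNonzero_iff_exists_entry {M : Mat m} {i : Fin m} :
    rowNonzero M i ↔ ∃ j, entry M i j ≠ 0 := by
  refine ⟨fun ⟨j, hj⟩ => ⟨j, by simpa using hj⟩, fun ⟨j, hj⟩ => ?_⟩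
  obtain ⟨-, hjm⟩ := lt_of_entry_ne_zero hj
  exact ⟨⟨j, hjm⟩, by rwa [entry_of_lt M i.isLt hjm] at hj⟩

lemma colNonzero_iff_exists_entry {M : Mat m} {j : Fin m} :
    colNonzero M j ↔ ∃ i, entry M i j ≠ 0 := by
  refine ⟨fun ⟨i, hi⟩ => ⟨i, by simpa using hi⟩, fun ⟨i, hi⟩ => ?_⟩
  obtain ⟨him, -⟩ := lt_of_entry_ne_zero hi
  exact ⟨⟨i, him⟩, by rwa [entry_of_lt M him j.isLt] at hi⟩

lemma UT.entry_eq_zero {M : Mat m} (h : UT M) {i j : ℕ} (hji : j < i) : entry M i j = 0 := by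
  unfold entry
  split_ifs
  exacts [h _ _ hji, rfl]

lemma UT.le_of_entry_ne_zero {M : Mat m} (h : UT M) {i j : ℕ} (hij : entry M i j ≠ 0) :
    i ≤ j :=
  not_lt.1 fun hji => hij (h.entry_eq_zero hji)

lemma SelfDual.entry_eq {M : Mat m} (h : SelfDual M) {i j : ℕ} (hi : i < m) (hj : j < m) :
    entry M i j = entry M (m - 1 - j) (m - 1 - i) := by
  rw [entry_of_lt M hi hj, entry_of_lt M (by omega) (by omega)]
  conv_lhs => rw [h]
  simp only [dual]
  congr 1 <;> ext <;> simp only [Fin.val_rev] <;> omega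

lemma SelfDual.colNonzero_rev_iff {M : Mat m} (h : SelfDual M) (i : Fin m) :
    colNonzero M i.rev ↔ rowNonzero M i := by
  have hrev : ∀ r, M r i.rev = M i r.rev := fun r => by
    conv_lhs => rw [h]
    simp [dual]
  refine ⟨fun ⟨r, hr⟩ => ⟨r.rev, hrev r ▸ hr⟩, fun ⟨j, hj⟩ => ⟨j.rev, ?_⟩⟩
  rwa [hrev, Fin.rev_rev]

lemma entry_reduced (M : Mat m) (i j : ℕ) :
    entry (reduced M) i j = if i + j + 1 ≤ m then entry M i j else 0 := by
  by_cases hb : i < m ∧ j < m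
  · simp [entry_of_lt _ hb.1 hb.2, reduced]
  · simp [entry_eq_zero_of_not_lt _ hb]

end Entries

section Statistics

variable {m : ℕ}

lemma msize_eq_sum_entry (M : Mat m) :
    msize M = ∑ i ∈ range m, ∑ j ∈ range m, entry M i j := by
  simp [msize, Finset.sum_range]

lemma reducedSize_eq_msize_reduced (M : Mat m) : reducedSize M = msize (reduced M) := rfl

lemma firstRowSum_eq_sum_entry (M : Mat m) :
    firstRowSum M = ∑ j ∈ range m, entry M 0 j := by
  cases m with
  | zero => simp [firstRowSum]
  | succ m =>
    rw [firstRowSum, Fin.sum_univ_succ, Finset.sum_range]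
    simp only [Fin.val_zero, ↓reduceIte, Fin.val_succ, Nat.add_one_ne_zero,
      Finset.sum_const_zero, add_zero]
    exact Finset.sum_congr rfl fun j _ => (entry_val M 0 j).symm

lemma diagSum_eq_sum_entry (M : Mat m) :
    diagSum M = ∑ i ∈ range m, entry M i (m - 1 - i) := by
  rw [diagSum, Finset.sum_range]
  refine Finset.sum_congr rfl fun i _ => ?_
  rw [Finset.sum_eq_single ⟨m - 1 - i, by omega⟩, if_pos (by simp only; omega), entry_of_lt]
  · exact fun j _ hj => if_neg fun h => hj (Fin.ext (by simp only; omega))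
  · simp

lemma centerColSum_eq_sum_entry {K : ℕ} (S : Mat (2 * K + 1)) :
    centerColSum S = ∑ i ∈ range (2 * K + 1), entry S i K := by
  rw [centerColSum, Finset.sum_range]
  refine Finset.sum_congr rfl fun i _ => ?_
  rw [Finset.sum_eq_single ⟨K, by omega⟩, if_pos rfl, entry_of_lt]
  · exact fun j _ hj => if_neg fun h => hj (Fin.ext (by simp only; omega))
  · simp

end Statistics

section ArrayOperations

variable (K : ℕ) (f : ℕ → ℕ → ℕ)

def rowSwap (i j : ℕ) : ℕ := f i (Equiv.swap K (2 * K - i) j)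

def insertZeroCol (i j : ℕ) : ℕ := if j < K then f i j else if j = K then 0 else f i (j - 1)

def deleteCol (i j : ℕ) : ℕ := f i (if j < K then j else j + 1)

def widen (m : ℕ) : ℕ → ℕ → ℕ := if m % 2 = 1 then f else insertZeroCol (m / 2) f

def IsSuperTri (m : ℕ) : Prop := ∀ i j, f i j ≠ 0 → i ≤ j ∧ i + j + 1 ≤ m

variable {K f}

@[simp] lemma rowSwap_rowSwap : rowSwap K (rowSwap K f) = f := by
  funext i j
  simp [rowSwap]

lemma rowSwap_swap (i j : ℕ) : rowSwap K f i (Equiv.swap K (2 * K - i) j) = f i j := by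
  simp [rowSwap]

lemma rowSwap_center (i : ℕ) : rowSwap K f i K = f i (2 * K - i) := by
  simp [rowSwap]

lemma rowSwap_antidiag (i : ℕ) : rowSwap K f i (2 * K - i) = f i K := by
  simp [rowSwap]

lemma rowSwap_of_ne {i j : ℕ} (h₁ : j ≠ K) (h₂ : j ≠ 2 * K - i) :
    rowSwap K f i j = f i j := by
  rw [rowSwap, Equiv.swap_apply_of_ne_of_ne h₁ h₂]

lemma sum_rowSwap (i : ℕ) :
    ∑ j ∈ range (2 * K + 1), rowSwap K f i j = ∑ j ∈ range (2 * K + 1), f i j := by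
  refine Equiv.Perm.sum_comp _ _ (f i) fun j hj => ?_
  change Equiv.swap _ _ j ≠ j at hj
  rw [Equiv.swap_apply_def] at hj
  rw [coe_range, Set.mem_Iio]
  split_ifs at hj <;> omega

lemma IsSuperTri.rowSwap (h : IsSuperTri f (2 * K + 1)) :
    IsSuperTri (rowSwap K f) (2 * K + 1) := by
  intro i j hij
  have := h _ _ hij
  revert this
  rw [Equiv.swap_apply_def]
  split_ifs <;> omega

lemma IsSuperTri.deleteCol (h : IsSuperTri f (2 * K + 1)) :
    IsSuperTri (deleteCol K f) (2 * K) := by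
  intro i j hij
  rw [_root_.deleteCol] at hij
  have := h _ _ hij
  split_ifs at this <;> omega

lemma exists_deleteCol_eq (i : ℕ) {u : ℕ} (hu : u ≠ K) :
    ∃ j, deleteCol K f i j = f i u := by
  refine ⟨if u < K then u else u - 1, ?_⟩
  rw [deleteCol]
  split_ifs <;> first | rfl | omega | (congr 1; omega)

lemma deleteCol_insertZeroCol : deleteCol K (insertZeroCol K f) = f := by
  funext i j
  simp only [deleteCol, insertZeroCol]
  split_ifs <;> first | rfl | omega

lemma insertZeroCol_deleteCol (h : ∀ i, f i K = 0) : insertZeroCol K (deleteCol K f) = f := by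
  funext i j
  simp only [deleteCol, insertZeroCol]
  split_ifs with h₁ h₂ <;> first | rfl | omega | (rw [h₂, h i]) | (congr 1; omega)

lemma sum_insertZeroCol {N : ℕ} (hKN : K ≤ N) (i : ℕ) :
    ∑ j ∈ range (N + 1), insertZeroCol K f i j = ∑ j ∈ range N, f i j := by
  induction N, hKN using Nat.le_induction with
  | base =>
    rw [Finset.sum_range_succ, insertZeroCol, if_neg (lt_irrefl K), if_pos rfl, add_zero]
    exact Finset.sum_congr rfl fun j hj => if_pos (Finset.mem_range.1 hj)
  | succ N hKN ih =>
    rw [Finset.sum_range_succ, ih, Finset.sum_range_succ, insertZeroCol,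
      if_neg (by omega), if_neg (by omega), Nat.add_sub_cancel]

lemma widen_of_odd {m : ℕ} (hm : m % 2 = 1) : widen f m = f := if_pos hm

lemma widen_of_even {m : ℕ} (hm : ¬ m % 2 = 1) : widen f m = insertZeroCol (m / 2) f := if_neg hm

lemma sum_widen (m i : ℕ) :
    ∑ j ∈ range (2 * (m / 2) + 1), widen f m i j = ∑ j ∈ range m, f i j := by
  by_cases hm : m % 2 = 1
  · rw [widen_of_odd hm, show 2 * (m / 2) + 1 = m by omega]
  · rw [widen_of_even hm, sum_insertZeroCol (by omega), show 2 * (m / 2) = m by omega]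

lemma widen_of_lt {m i j : ℕ} (hj : j < m / 2) : widen f m i j = f i j := by
  by_cases hm : m % 2 = 1
  · rw [widen_of_odd hm]
  · rw [widen_of_even hm, insertZeroCol, if_pos hj]

lemma widen_mirror {m i a : ℕ} (ha : a < m / 2) :
    widen f m i (2 * (m / 2) - a) = f i (m - 1 - a) := by
  by_cases hm : m % 2 = 1
  · rw [widen_of_odd hm, show 2 * (m / 2) - a = m - 1 - a by omega]
  · rw [widen_of_even hm, insertZeroCol, if_neg (by omega), if_neg (by omega)]
    congr 1
    omega

lemma exists_widen_eq (m i j : ℕ) : ∃ t, widen f m i t = f i j := by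
  by_cases hm : m % 2 = 1
  · exact ⟨j, by rw [widen_of_odd hm]⟩
  · refine ⟨if j < m / 2 then j else j + 1, ?_⟩
    rw [widen_of_even hm, insertZeroCol]
    split_ifs <;> first | rfl | omega

end ArrayOperations

section Forward

variable {m : ℕ}

def toSMMat (m : ℕ) (M : Mat m) : Mat (2 * (m / 2) + 1) :=
  fun i j => rowSwap (m / 2) (widen (entry (reduced M)) m) i j

def toSM (A : SMat) : SMat := ⟨2 * (A.1 / 2) + 1, toSMMat A.1 A.2⟩

lemma entry_of_isSuperTri {f : ℕ → ℕ → ℕ} (h : IsSuperTri f m) :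
    entry (fun i j : Fin m => f i j) = f := by
  funext i j
  by_cases hb : i < m ∧ j < m
  · exact entry_of_lt _ hb.1 hb.2
  · simp only [entry, dif_neg hb]
    by_contra hne
    have := h i j (Ne.symm hne)
    omega

lemma superTri_iff_isSuperTri {S : Mat m} : SuperTri S ↔ IsSuperTri (entry S) m := by
  refine ⟨fun h i j hij => ?_, fun h => ⟨fun i j hji => ?_, fun i j hij => ?_⟩⟩
  · obtain ⟨hi, hj⟩ := lt_of_entry_ne_zero hij
    rw [entry_of_lt S hi hj] at hij
    exact ⟨not_lt.1 fun hji => hij (h.1 _ _ hji),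
      by by_contra hc; exact hij (h.2 _ _ (by simp only; omega))⟩
  all_goals
    by_contra hne
    have := h _ _ (by rwa [entry_val])
    omega

lemma isSuperTri_reduced {M : Mat m} (hUT : UT M) : IsSuperTri (entry (reduced M)) m := by
  intro i j h
  rw [entry_reduced] at h
  split_ifs at h with hc
  · exact ⟨hUT.le_of_entry_ne_zero h, hc⟩
  · exact absurd rfl h

lemma isSuperTri_widen_reduced {M : Mat m} (hUT : UT M) :
    IsSuperTri (widen (entry (reduced M)) m) (2 * (m / 2) + 1) := by
  have hred := isSuperTri_reduced hUT
  intro i j hij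
  by_cases hm : m % 2 = 1
  · rw [widen_of_odd hm] at hij
    have := hred i j hij
    omega
  · rw [widen_of_even hm, insertZeroCol] at hij
    split_ifs at hij with h₁ h₂
    · have := hred i j hij
      omega
    · exact absurd rfl hij
    · have := hred i (j - 1) hij
      omega

lemma entry_toSMMat {M : Mat m} (hUT : UT M) :
    entry (toSMMat m M) = rowSwap (m / 2) (widen (entry (reduced M)) m) :=
  entry_of_isSuperTri (isSuperTri_widen_reduced hUT).rowSwap

lemma superTri_toSMMat {M : Mat m} (hUT : UT M) : SuperTri (toSMMat m M) := by
  rw [superTri_iff_isSuperTri, entry_toSMMat hUT]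
  exact (isSuperTri_widen_reduced hUT).rowSwap

end Forward

section ForwardProperties

variable {m : ℕ} {M : Mat m}

lemma sum_row_toSMMat (hUT : UT M) (i : ℕ) :
    ∑ j ∈ range (2 * (m / 2) + 1), entry (toSMMat m M) i j
      = ∑ j ∈ range m, entry (reduced M) i j := by
  rw [entry_toSMMat hUT, sum_rowSwap, sum_widen]

lemma msize_toSMMat (hUT : UT M) : msize (toSMMat m M) = reducedSize M := by
  rw [msize_eq_sum_entry, reducedSize_eq_msize_reduced, msize_eq_sum_entry]
  simp_rw [sum_row_toSMMat hUT]
  refine (Finset.sum_subset (range_subset_range.2 (by omega)) fun i _ hi => ?_).symm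
  rw [Finset.mem_range] at hi
  exact Finset.sum_eq_zero fun j _ => entry_eq_zero_of_not_lt _ (by omega)

lemma firstRowSum_toSMMat (hUT : UT M) : firstRowSum (toSMMat m M) = firstRowSum M := by
  rw [firstRowSum_eq_sum_entry, sum_row_toSMMat hUT, firstRowSum_eq_sum_entry]
  exact Finset.sum_congr rfl fun j hj => by
    rw [entry_reduced, if_pos (by rw [Finset.mem_range] at hj; omega)]

lemma widen_reduced_mirror (hUT : UT M) {i : ℕ} (hi : i ≤ 2 * (m / 2)) :
    widen (entry (reduced M)) m i (2 * (m / 2) - i) = entry M i (m - 1 - i) := by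
  by_cases hm : m % 2 = 1
  · rw [widen_of_odd hm, entry_reduced, if_pos (by omega),
      show 2 * (m / 2) - i = m - 1 - i by omega]
  · have hlower : m / 2 ≤ i → entry M i (m - 1 - i) = 0 := fun h =>
      if him : i < m then hUT.entry_eq_zero (by omega) else entry_eq_zero_of_not_lt _ (by omega)
    rw [widen_of_even hm, insertZeroCol]
    split_ifs with h₁ h₂
    · rw [entry_reduced, if_neg (by omega), hlower (by omega)]
    · rw [hlower (by omega)]
    · rw [entry_reduced, if_pos (by omega), show 2 * (m / 2) - i - 1 = m - 1 - i by omega]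

lemma centerColSum_toSMMat (hUT : UT M) : centerColSum (toSMMat m M) = diagSum M := by
  rw [centerColSum_eq_sum_entry, entry_toSMMat hUT, diagSum_eq_sum_entry]
  simp_rw [rowSwap_center]
  rw [Finset.sum_congr rfl fun i hi =>
    widen_reduced_mirror hUT (Nat.le_of_lt_succ (mem_range.1 hi))]
  refine (Finset.sum_subset (range_subset_range.2 (by omega)) fun i _ hi => ?_).symm
  exact entry_eq_zero_of_not_lt _ (by rw [Finset.mem_range] at hi; omega)

lemma colNonzero_toSMMat_of_lt (hUT : UT M) (hcol : ∀ j, colNonzero M j)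
    {j : Fin (2 * (m / 2) + 1)} (hj : (j : ℕ) < m / 2) : colNonzero (toSMMat m M) j := by
  obtain ⟨i, hi⟩ := colNonzero_iff_exists_entry.1 (hcol ⟨j, by omega⟩)
  have hij : i ≤ j := hUT.le_of_entry_ne_zero hi
  refine colNonzero_iff_exists_entry.2 ⟨i, ?_⟩
  rw [entry_toSMMat hUT, rowSwap_of_ne (by omega) (by omega), widen_of_lt hj, entry_reduced,
    if_pos (by omega)]
  exact hi

lemma rowNonzero_or_colNonzero_toSMMat (hUT : UT M) (hSD : SelfDual M)
    (hrow : ∀ i, rowNonzero M i) {a b : Fin (2 * (m / 2) + 1)} (ha : (a : ℕ) < m / 2)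
    (hab : (a : ℕ) + b = 2 * (m / 2)) :
    rowNonzero (toSMMat m M) a ∨ colNonzero (toSMMat m M) b := by
  obtain ⟨j, hj⟩ := rowNonzero_iff_exists_entry.1 (hrow ⟨a, by omega⟩)
  have hjm := (lt_of_entry_ne_zero hj).2
  by_cases hNW : (a : ℕ) + j + 1 ≤ m
  · left
    obtain ⟨t, ht⟩ := exists_widen_eq (f := entry (reduced M)) m a j
    refine rowNonzero_iff_exists_entry.2 ⟨Equiv.swap (m / 2) (2 * (m / 2) - a) t, ?_⟩
    rw [entry_toSMMat hUT, rowSwap_swap, ht, entry_reduced, if_pos hNW]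
    exact hj
  · -- the SE-cell `(a, j)` is mirrored to the NW-cell `(m-1-j, m-1-a)`, which lands in column `b`
    right
    rw [hSD.entry_eq (by omega) hjm] at hj
    refine colNonzero_iff_exists_entry.2 ⟨m - 1 - j, ?_⟩
    rw [entry_toSMMat hUT, show (b : ℕ) = 2 * (m / 2) - a by omega,
      rowSwap_of_ne (by omega) (by omega), widen_mirror ha, entry_reduced, if_pos (by omega)]
    exact hj

lemma entry_toSMMat_antidiag (hUT : UT M) (i : ℕ) :
    entry (toSMMat m M) i (2 * (m / 2) - i) = widen (entry (reduced M)) m i (m / 2) := by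
  rw [entry_toSMMat hUT, rowSwap_antidiag]

lemma exists_antidiag_toSMMat_ne_zero (hUT : UT M) (hcol : ∀ j, colNonzero M j)
    (hm : m % 2 = 1) : ∃ i, entry (toSMMat m M) i (2 * (m / 2) - i) ≠ 0 := by
  obtain ⟨i, hi⟩ := colNonzero_iff_exists_entry.1 (hcol ⟨m / 2, by omega⟩)
  have hiK : i ≤ m / 2 := hUT.le_of_entry_ne_zero hi
  refine ⟨i, ?_⟩
  rw [entry_toSMMat_antidiag hUT, widen_of_odd hm, entry_reduced, if_pos (by omega)]
  exact hi

lemma antidiag_toSMMat_eq_zero (hUT : UT M) (hm : ¬ m % 2 = 1) (i : ℕ) :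
    entry (toSMMat m M) i (2 * (m / 2) - i) = 0 := by
  rw [entry_toSMMat_antidiag hUT, widen_of_even hm, insertZeroCol, if_neg (lt_irrefl _),
    if_pos rfl]

end ForwardProperties

section Backward

variable {m : ℕ} {f : ℕ → ℕ → ℕ}

def selfDualOf (m : ℕ) (f : ℕ → ℕ → ℕ) : Mat m := fun i j =>
  if (i : ℕ) + j + 1 ≤ m then f i j else f (m - 1 - j) (m - 1 - i)

noncomputable def ofSM (A : SMat) : SMat :=
  open Classical in
  if ∀ i, entry A.2 i (2 * (A.1 / 2) - i) = 0 then
    ⟨2 * (A.1 / 2), selfDualOf _ (deleteCol (A.1 / 2) (rowSwap (A.1 / 2) (entry A.2)))⟩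
  else ⟨2 * (A.1 / 2) + 1, selfDualOf _ (rowSwap (A.1 / 2) (entry A.2))⟩

lemma selfDual_selfDualOf (m : ℕ) (f : ℕ → ℕ → ℕ) : SelfDual (selfDualOf m f) := by
  funext i j
  simp only [dual, selfDualOf, Fin.val_rev]
  split_ifs <;> congr 1 <;> omega

lemma entry_selfDualOf {i j : ℕ} (h : i + j + 1 ≤ m) : entry (selfDualOf m f) i j = f i j := by
  rw [entry_of_lt _ (by omega) (by omega)]
  exact if_pos h

lemma ut_selfDualOf (hf : IsSuperTri f m) : UT (selfDualOf m f) := by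
  intro i j hji
  simp only [selfDualOf]
  split_ifs
  all_goals
    by_contra hne
    have := hf _ _ hne
    omega

lemma entry_reduced_selfDualOf (hf : IsSuperTri f m) : entry (reduced (selfDualOf m f)) = f := by
  funext i j
  rw [entry_reduced]
  split_ifs with hij
  · exact entry_selfDualOf hij
  · by_contra hne
    exact hij (hf _ _ (Ne.symm hne)).2

lemma entry_selfDualOf_reduced {d : ℕ} {M : Mat m} (hSD : SelfDual M) (hd : d = m) :
    entry (selfDualOf d (entry (reduced M))) = entry M := by
  subst hd
  funext i j
  by_cases hb : i < d ∧ j < d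
  · rw [entry_of_lt _ hb.1 hb.2]
    simp only [selfDualOf]
    split_ifs with h
    · rw [entry_reduced, if_pos h]
    · rw [entry_reduced, if_pos (by omega), ← hSD.entry_eq hb.1 hb.2]
  · rw [entry_eq_zero_of_not_lt _ hb, entry_eq_zero_of_not_lt _ hb]

lemma rowNonzero_selfDualOf (hf : IsSuperTri f m) {i : Fin m} {j : ℕ} (h : f i j ≠ 0) :
    rowNonzero (selfDualOf m f) i :=
  rowNonzero_iff_exists_entry.2 ⟨j, by rwa [entry_selfDualOf (hf _ _ h).2]⟩

lemma colNonzero_selfDualOf (hf : IsSuperTri f m) {i : ℕ} {j : Fin m} (h : f i j ≠ 0) :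
    colNonzero (selfDualOf m f) j :=
  colNonzero_iff_exists_entry.2 ⟨i, by rwa [entry_selfDualOf (hf _ _ h).2]⟩

lemma colNonzero_selfDualOf_of_rev (hf : IsSuperTri f m) {j : Fin m} {t : ℕ}
    (h : f j.rev t ≠ 0) : colNonzero (selfDualOf m f) j := by
  rw [← Fin.rev_rev j, (selfDual_selfDualOf m f).colNonzero_rev_iff]
  exact rowNonzero_selfDualOf hf h

end Backward

section Inverse

variable {K : ℕ} {S : Mat (2 * K + 1)}

lemma ofSM_of_antidiag_eq_zero (h : ∀ i, entry S i (2 * K - i) = 0) :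
    ofSM ⟨2 * K + 1, S⟩ = ⟨2 * K, selfDualOf _ (deleteCol K (rowSwap K (entry S)))⟩ := by
  rw [ofSM, show (2 * K + 1) / 2 = K by omega, if_pos h]

lemma ofSM_of_antidiag_ne_zero (h : ∃ i, entry S i (2 * K - i) ≠ 0) :
    ofSM ⟨2 * K + 1, S⟩ = ⟨2 * K + 1, selfDualOf _ (rowSwap K (entry S))⟩ := by
  rw [ofSM, show (2 * K + 1) / 2 = K by omega, if_neg (not_forall.2 h)]

lemma toSM_mk {m : ℕ} (M : Mat m) : toSM ⟨m, M⟩ = ⟨2 * (m / 2) + 1, toSMMat m M⟩ := rfl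

lemma toSM_ofSM (hST : SuperTri S) : toSM (ofSM ⟨2 * K + 1, S⟩) = ⟨2 * K + 1, S⟩ := by
  have hg := (superTri_iff_isSuperTri.1 hST).rowSwap
  by_cases h0 : ∀ i, entry S i (2 * K - i) = 0
  · have hcenter : ∀ i, rowSwap K (entry S) i K = 0 := fun i => by rw [rowSwap_center, h0]
    rw [ofSM_of_antidiag_eq_zero h0, toSM_mk]
    refine SMat.ext_entry (by dsimp only; omega) ?_
    dsimp only
    rw [entry_toSMMat (ut_selfDualOf hg.deleteCol), widen_of_even (by omega),
      show 2 * K / 2 = K by omega, entry_reduced_selfDualOf hg.deleteCol,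
      insertZeroCol_deleteCol hcenter, rowSwap_rowSwap]
  · rw [ofSM_of_antidiag_ne_zero (not_forall.1 h0), toSM_mk]
    refine SMat.ext_entry (by dsimp only; omega) ?_
    dsimp only
    rw [entry_toSMMat (ut_selfDualOf hg), show (2 * K + 1) / 2 = K by omega,
      widen_of_odd (by omega), entry_reduced_selfDualOf hg, rowSwap_rowSwap]

lemma ofSM_toSM {m : ℕ} {M : Mat m} (hF : IsFishburn M) (hSD : SelfDual M) :
    ofSM (toSM ⟨m, M⟩) = ⟨m, M⟩ := by
  obtain ⟨hUT, -, hcol⟩ := hF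
  rw [toSM_mk]
  by_cases hm : m % 2 = 1
  · rw [ofSM_of_antidiag_ne_zero (exists_antidiag_toSMMat_ne_zero hUT hcol hm)]
    refine SMat.ext_entry (by dsimp only; omega) ?_
    dsimp only
    rw [entry_toSMMat hUT, rowSwap_rowSwap, widen_of_odd hm]
    exact entry_selfDualOf_reduced hSD (by omega)
  · rw [ofSM_of_antidiag_eq_zero (antidiag_toSMMat_eq_zero hUT hm)]
    refine SMat.ext_entry (by dsimp only; omega) ?_
    dsimp only
    rw [entry_toSMMat hUT, rowSwap_rowSwap, widen_of_even hm, deleteCol_insertZeroCol]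
    exact entry_selfDualOf_reduced hSD (by omega)

end Inverse

section InverseFishburn

variable {K : ℕ} {S : Mat (2 * K + 1)}

lemma exists_rowSwap_ne_zero_of_lt (hST : SuperTri S)
    (hcol : ∀ j : Fin (2 * K + 1), (j : ℕ) < K → colNonzero S j) {c : ℕ} (hc : c < K) :
    ∃ i, rowSwap K (entry S) i c ≠ 0 := by
  obtain ⟨i, hi⟩ := colNonzero_iff_exists_entry.1 (hcol ⟨c, by omega⟩ hc)
  have := superTri_iff_isSuperTri.1 hST i c hi
  exact ⟨i, by rwa [rowSwap_of_ne (by omega) (by omega)]⟩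

lemma colNonzero_ofSM_odd (hST : SuperTri S)
    (hcol : ∀ j : Fin (2 * K + 1), (j : ℕ) < K → colNonzero S j)
    (hrowcol : ∀ a b : Fin (2 * K + 1), (a : ℕ) < K → (a : ℕ) + (b : ℕ) = 2 * K →
      rowNonzero S a ∨ colNonzero S b)
    (h : ∃ i, entry S i (2 * K - i) ≠ 0) (c : Fin (2 * K + 1)) :
    colNonzero (selfDualOf (2 * K + 1) (rowSwap K (entry S))) c := by
  have hS := superTri_iff_isSuperTri.1 hST
  have hg := hS.rowSwap
  rcases lt_trichotomy (c : ℕ) K with hc | hc | hc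
  · obtain ⟨i, hi⟩ := exists_rowSwap_ne_zero_of_lt hST hcol hc
    exact colNonzero_selfDualOf hg hi
  · obtain ⟨i, hi⟩ := h
    exact colNonzero_selfDualOf hg (i := i) (by rwa [hc, rowSwap_center])
  · have hrev : (c.rev : ℕ) = 2 * K - c := by rw [Fin.val_rev]; omega
    have hrow : rowNonzero S c.rev → colNonzero _ c := fun hr => by
      obtain ⟨t, ht⟩ := rowNonzero_iff_exists_entry.1 hr
      exact colNonzero_selfDualOf_of_rev hg (by rwa [rowSwap_swap])
    rcases hrowcol c.rev c (by omega) (by omega) with hr | hc'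
    · exact hrow hr
    · obtain ⟨i, hi⟩ := colNonzero_iff_exists_entry.1 hc'
      have := hS i c hi
      rcases (show i = c.rev ∨ i < c.rev by omega) with rfl | hlt
      · exact hrow (rowNonzero_iff_exists_entry.2 ⟨c, hi⟩)
      · exact colNonzero_selfDualOf hg (i := i) (by rwa [rowSwap_of_ne (by omega) (by omega)])

lemma colNonzero_ofSM_even (hST : SuperTri S)
    (hcol : ∀ j : Fin (2 * K + 1), (j : ℕ) < K → colNonzero S j)
    (hrowcol : ∀ a b : Fin (2 * K + 1), (a : ℕ) < K → (a : ℕ) + (b : ℕ) = 2 * K →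
      rowNonzero S a ∨ colNonzero S b)
    (h : ∀ i, entry S i (2 * K - i) = 0) (c : Fin (2 * K)) :
    colNonzero (selfDualOf (2 * K) (deleteCol K (rowSwap K (entry S)))) c := by
  have hS := superTri_iff_isSuperTri.1 hST
  have hg := hS.rowSwap.deleteCol
  by_cases hc : (c : ℕ) < K
  · obtain ⟨i, hi⟩ := exists_rowSwap_ne_zero_of_lt hST hcol hc
    exact colNonzero_selfDualOf hg (i := i) (by rwa [deleteCol, if_pos hc])
  · have hrev : (c.rev : ℕ) = 2 * K - 1 - c := by rw [Fin.val_rev]; omega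
    rcases hrowcol ⟨c.rev, by omega⟩ ⟨c + 1, by omega⟩ (by simp only; omega)
      (by simp only; omega) with hr | hc'
    · obtain ⟨t, ht⟩ := rowNonzero_iff_exists_entry.1 hr
      have hu : rowSwap K (entry S) c.rev (Equiv.swap K (2 * K - c.rev) t) ≠ 0 := by
        rwa [rowSwap_swap]
      have huK : Equiv.swap K (2 * K - c.rev) t ≠ K := fun hK => by
        rw [hK, rowSwap_center, h] at hu
        exact hu rfl
      obtain ⟨j, hj⟩ := exists_deleteCol_eq (f := rowSwap K (entry S)) c.rev huK
      exact colNonzero_selfDualOf_of_rev hg (t := j) (by rwa [hj])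
    · obtain ⟨i, hi⟩ := colNonzero_iff_exists_entry.1 hc'
      simp only at hi
      have := hS i _ hi
      -- column `c + 1 = 2K - c.rev` meets the zero antidiagonal in row `c.rev`
      have hia : i ≠ c.rev := fun hi' => hi (by
        rw [hi', hrev, show (c : ℕ) + 1 = 2 * K - (2 * K - 1 - c) by omega]
        exact h _)
      exact colNonzero_selfDualOf hg (i := i)
        (by rwa [deleteCol, if_neg hc, rowSwap_of_ne (by omega) (by omega)])

end InverseFishburn

section Bijection

variable {n k p : ℕ}

lemma mapsTo_toSM : Set.MapsTo toSM (Mset₃ n k p) (SMset₃ n k p) := by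
  rintro ⟨m, M⟩ ⟨⟨⟨⟨hUT, hrow, hcol⟩, hSD, hsize⟩, hk⟩, hp⟩
  exact ⟨⟨superTri_toSMMat hUT, (msize_toSMMat hUT).trans hsize, m / 2, rfl,
    fun j hj => colNonzero_toSMMat_of_lt hUT hcol hj,
    fun a b ha hab => rowNonzero_or_colNonzero_toSMMat hUT hSD hrow ha hab⟩,
    (firstRowSum_toSMMat hUT).trans hk, (centerColSum_toSMMat hUT).trans hp⟩

lemma mem_Mset₃_of_toSM_mem {m : ℕ} {M : Mat m} (hUT : UT M) (hSD : SelfDual M)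
    (hcol : ∀ j, colNonzero M j) (hM : toSM ⟨m, M⟩ ∈ SMset₃ n k p) :
    (⟨m, M⟩ : SMat) ∈ Mset₃ n k p := by
  obtain ⟨⟨-, hsize, -⟩, hk, hp⟩ := hM
  refine ⟨⟨⟨⟨hUT, fun i => ?_, hcol⟩, hSD, ?_⟩, ?_⟩, ?_⟩
  · exact (hSD.colNonzero_rev_iff i).1 (hcol _)
  · exact (msize_toSMMat hUT).symm.trans hsize
  · exact (firstRowSum_toSMMat hUT).symm.trans hk
  · exact (centerColSum_toSMMat hUT).symm.trans hp

lemma mapsTo_ofSM : Set.MapsTo ofSM (SMset₃ n k p) (Mset₃ n k p) := by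
  rintro ⟨d, S⟩ hB
  obtain ⟨⟨hST, -, K, rfl, hcol, hrowcol⟩, -⟩ := id hB
  have hFG := toSM_ofSM hST
  by_cases h0 : ∀ i, entry S i (2 * K - i) = 0
  · rw [ofSM_of_antidiag_eq_zero h0] at hFG ⊢
    have hg := (superTri_iff_isSuperTri.1 hST).rowSwap.deleteCol
    exact mem_Mset₃_of_toSM_mem (ut_selfDualOf hg) (selfDual_selfDualOf _ _)
      (colNonzero_ofSM_even hST hcol hrowcol h0) (hFG ▸ hB)
  · rw [ofSM_of_antidiag_ne_zero (not_forall.1 h0)] at hFG ⊢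
    have hg := (superTri_iff_isSuperTri.1 hST).rowSwap
    exact mem_Mset₃_of_toSM_mem (ut_selfDualOf hg) (selfDual_selfDualOf _ _)
      (colNonzero_ofSM_odd hST hcol hrowcol (not_forall.1 h0)) (hFG ▸ hB)

lemma leftInvOn_ofSM_toSM : Set.LeftInvOn ofSM toSM (Mset₃ n k p) := by
  rintro ⟨m, M⟩ ⟨⟨⟨hF, hSD, -⟩, -⟩, -⟩
  exact ofSM_toSM hF hSD

lemma rightInvOn_ofSM_toSM : Set.RightInvOn ofSM toSM (SMset₃ n k p) := by
  rintro ⟨d, S⟩ ⟨⟨hST, -, K, rfl, -⟩, -⟩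
  exact toSM_ofSM hST

end Bijection

theorem stmt3_general (n k p : ℕ) :
    (Mset₃ n k p).ncard = (SMset₃ n k p).ncard :=
  (Set.InvOn.bijOn ⟨leftInvOn_ofSM_toSM, rightInvOn_ofSM_toSM⟩ mapsTo_toSM mapsTo_ofSM).ncard_eq

/-- `|M(n,k,p)| = |SM(n,k,p)|` for all `n ≥ 1`, `k ≥ 0`, `p ≥ 0`. -/
theorem stmt3 (n k p : ℕ) (hn : 1 ≤ n) :
    (Mset₃ n k p).ncard = (SMset₃ n k p).ncard :=
  stmt3_general n k p
end

section
/- For all n ≥ 1, k ≥ 0 and p ≥ 0, the number of matrices in SM(n) whose first row has sum k and whose center column has sum p equals the number of matrices in B(n) whose last column has sum k and whose first row has sum p; that is, |SM(n,k,p)| = |B(n,k,p)|. -/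
open Finset

/-!
Order the columns of a matrix `M ∈ SM(n)` of dimension `2m + 1` outward from the center,
`m, m - 1, m + 1, m - 2, m + 2, …`, and drop the zero columns right of the center. The kept
columns, in this order, index the rows of `φ(M)`; its columns are slots, one per kept column,
row `r < m` of `M` filling the slot of column `2m - r` when that column is kept and the slot of
column `r` otherwise. Super-triangularity of `M` becomes upper-triangularity of `φ(M)`,
condition (a) makes every row of `φ(M)` but the first nonzero, and the center column, the first
row and the size of `M` become the first row, the last column and the size of `φ(M)`.
Condition (b) makes `φ` invertible: in `B = φ(M)` the row of column `m - 1 - c` is followed by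
the row of column `m + 1 + c` exactly when its own column of `B` is zero, so parsing `B` from the
top recovers `m` and the position of every column of `M`.
-/

namespace Nat

variable {p : ℕ → Prop} [DecidablePred p] {N x : ℕ}

lemma nth_mem_of_lt_count (hx : x < count p N) : p (nth p x) :=
  nth_mem x fun hf => hx.trans_le (count_le_card hf N)

lemma count_nth_of_lt_count (hx : x < count p N) : count p (nth p x) = x :=
  count_nth fun hf => hx.trans_le (count_le_card hf N)

lemma sum_range_count_comp_nth {β : Type*} [AddCommMonoid β] (F : ℕ → β) :
    ∑ x ∈ Finset.range (count p N), F (nth p x) = ∑ u ∈ Finset.range N with p u, F u := by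
  refine Finset.sum_nbij' (nth p) (count p) (fun x hx => ?_) (fun u hu => ?_)
    (fun x hx => ?_) (fun u hu => nth_count (Finset.mem_filter.1 hu).2) (fun _ _ => rfl)
  · rw [Finset.mem_range] at hx
    exact Finset.mem_filter.2
      ⟨Finset.mem_range.2 (nth_lt_of_lt_count hx), nth_mem_of_lt_count hx⟩
  · obtain ⟨hu, hpu⟩ := Finset.mem_filter.1 hu
    exact Finset.mem_range.2 (count_strict_mono hpu (Finset.mem_range.1 hu))
  · exact count_nth_of_lt_count (Finset.mem_range.1 hx)

end Nat

namespace SelfDualFishburn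

noncomputable section

def entry {d : ℕ} (M : Mat d) (r v : ℕ) : ℕ :=
  if h : r < d ∧ v < d then M ⟨r, h.1⟩ ⟨v, h.2⟩ else 0

def NzRow {d : ℕ} (M : Mat d) (r : ℕ) : Prop := ∃ v, entry M r v ≠ 0

def NzCol {d : ℕ} (M : Mat d) (v : ℕ) : Prop := ∃ r, entry M r v ≠ 0

section Entry

variable {d : ℕ} (M : Mat d)

@[simp]
lemma entry_fin (i j : Fin d) : entry M i j = M i j := by
  simp [entry]

lemma entry_eq_zero_of_le {r v : ℕ} (h : d ≤ r ∨ d ≤ v) : entry M r v = 0 :=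
  dif_neg (by omega)

lemma lt_of_entry_ne_zero {r v : ℕ} (h : entry M r v ≠ 0) : r < d ∧ v < d := by
  by_contra h'
  exact h (entry_eq_zero_of_le M (by omega))

lemma nzRow_iff (i : Fin d) : NzRow M i ↔ rowNonzero M i := by
  refine ⟨fun ⟨v, hv⟩ => ?_, fun ⟨j, hj⟩ => ⟨j, by simpa using hj⟩⟩
  have hvd := (lt_of_entry_ne_zero M hv).2
  exact ⟨⟨v, hvd⟩, by simpa using entry_fin M i ⟨v, hvd⟩ ▸ hv⟩

lemma nzCol_iff (j : Fin d) : NzCol M j ↔ colNonzero M j := by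
  refine ⟨fun ⟨r, hr⟩ => ?_, fun ⟨i, hi⟩ => ⟨i, by simpa using hi⟩⟩
  have hrd := (lt_of_entry_ne_zero M hr).1
  exact ⟨⟨r, hrd⟩, by simpa using entry_fin M ⟨r, hrd⟩ j ▸ hr⟩

lemma sum_fin_ite (P : ℕ → ℕ → Prop) [DecidableRel P] :
    ∑ i : Fin d, ∑ j : Fin d, (if P i j then M i j else 0)
      = ∑ r ∈ range d, ∑ v ∈ range d, if P r v then entry M r v else 0 := by
  simp only [← entry_fin M]
  rw [← Fin.sum_univ_eq_sum_range]
  refine sum_congr rfl fun i _ => ?_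
  exact Fin.sum_univ_eq_sum_range (fun v => if P i v then entry M i v else 0) d

lemma msize_eq_sum_entry : msize M = ∑ r ∈ range d, ∑ v ∈ range d, entry M r v := by
  simpa [msize] using sum_fin_ite M (fun _ _ => True)

lemma firstRowSum_eq_sum_entry : firstRowSum M = ∑ v ∈ range d, entry M 0 v := by
  rcases Nat.eq_zero_or_pos d with rfl | hd
  · simp [firstRowSum]
  rw [firstRowSum, sum_fin_ite M (fun r _ => r = 0)]
  simp [Finset.sum_ite_irrel, hd]

lemma lastColSum_eq_sum_entry : lastColSum M = ∑ r ∈ range d, entry M r (d - 1) := by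
  rcases Nat.eq_zero_or_pos d with rfl | hd
  · simp [lastColSum]
  have : ∀ v, v + 1 = d ↔ v = d - 1 := by omega
  rw [lastColSum, sum_fin_ite M (fun _ v => v + 1 = d)]
  simp [this, hd]

lemma centerColSum_eq_sum_entry {m : ℕ} (M : Mat (2 * m + 1)) :
    centerColSum M = ∑ r ∈ range (2 * m + 1), entry M r m := by
  have : ∀ v, 2 * v + 1 = 2 * m + 1 ↔ v = m := by omega
  rw [centerColSum, sum_fin_ite M (fun _ v => 2 * v + 1 = 2 * m + 1)]
  simp only [this, sum_ite_eq', mem_range, if_pos (show m < 2 * m + 1 by omega)]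

lemma UT.entry_eq_zero {M : Mat d} (h : UT M) {r v : ℕ} (hvr : v < r) : entry M r v = 0 := by
  unfold entry
  split_ifs with hlt
  exacts [h ⟨r, hlt.1⟩ ⟨v, hlt.2⟩ hvr, rfl]

omit M in
lemma sigma_mk_eq_of_entry {d' : ℕ} {M : Mat d} {M' : Mat d'} (h : d = d')
    (he : ∀ r v, entry M r v = entry M' r v) : (⟨d, M⟩ : SMat) = ⟨d', M'⟩ := by
  subst h
  congr
  ext i j
  simpa using he i j

end Entry

/-- Keys `0, 1, 2, 3, 4, …` enumerate the columns `m, m - 1, m + 1, m - 2, m + 2, …`. -/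
def keyCol (m u : ℕ) : ℕ := if u % 2 = 0 then m + u / 2 else m - (u + 1) / 2

def colKey (m v : ℕ) : ℕ := if v < m then 2 * (m - v) - 1 else 2 * (v - m)

section Keys

variable {m u v : ℕ}

lemma keyCol_colKey (h : v ≤ 2 * m) : keyCol m (colKey m v) = v := by
  unfold keyCol colKey; split_ifs <;> omega

lemma colKey_keyCol (h : u ≤ 2 * m) : colKey m (keyCol m u) = u := by
  unfold keyCol colKey; split_ifs <;> omega

lemma colKey_le (h : v ≤ 2 * m) : colKey m v ≤ 2 * m := by
  unfold colKey; split_ifs <;> omega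

lemma keyCol_le (h : u ≤ 2 * m) : keyCol m u ≤ 2 * m := by
  unfold keyCol; split_ifs <;> omega

lemma keyCol_odd (c : ℕ) : keyCol m (2 * c + 1) = m - (c + 1) := by
  unfold keyCol; split_ifs <;> omega

lemma keyCol_even (t : ℕ) : keyCol m (2 * t) = m + t := by
  rw [keyCol, if_pos (by omega)]; omega

lemma colKey_of_lt (h : v < m) : colKey m v = 2 * (m - (v + 1)) + 1 := by
  rw [colKey, if_pos h]; omega

lemma colKey_of_le (h : m ≤ v) : colKey m v = 2 * (v - m) := by
  rw [colKey, if_neg (by omega)]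

end Keys

attribute [local instance] Classical.propDecidable

/-- The columns of `M` that index the rows of `φ(M)`. -/
def IsKept {d : ℕ} (M : Mat d) (v : ℕ) : Prop := v ≤ d / 2 ∨ NzCol M v

def IsKey {d : ℕ} (M : Mat d) (u : ℕ) : Prop := u < d ∧ IsKept M (keyCol (d / 2) u)

def numKeys {d : ℕ} (M : Mat d) : ℕ := Nat.count (IsKey M) d

/-- The column of `M` behind row `x` of `φ(M)`. -/
def phiCol {d : ℕ} (M : Mat d) (x : ℕ) : ℕ := keyCol (d / 2) (Nat.nth (IsKey M) x)

/-- The position of column `v` among the kept columns. -/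
def colPos {d : ℕ} (M : Mat d) (v : ℕ) : ℕ := Nat.count (IsKey M) (colKey (d / 2) v)

/-- The row of `M` placed at the slot of column `v`: row `r < m` takes the slot of column
`2m - r` if that column is kept, and the slot of column `r` otherwise; a slot left free
receives a row below the center, which is zero. -/
def slotRow {d : ℕ} (M : Mat d) (v : ℕ) : ℕ :=
  if NzCol M (2 * (d / 2) - v) then 2 * (d / 2) - v else v

def phiMat {d : ℕ} (M : Mat d) : Mat (numKeys M) :=
  fun x y => entry M (slotRow M (phiCol M y)) (phiCol M x)

def phi (A : SMat) : SMat := ⟨numKeys A.2, phiMat A.2⟩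

/-- The column whose slot receives row `r ≤ m`. -/
def rowSlot {m : ℕ} (M : Mat (2 * m + 1)) (r : ℕ) : ℕ :=
  if r < m ∧ ¬ NzCol M (2 * m - r) then r else 2 * m - r

lemma rowSlot_le {m : ℕ} (M : Mat (2 * m + 1)) (r : ℕ) : rowSlot M r ≤ 2 * m := by
  unfold rowSlot; split_ifs <;> omega

structure IsSMat {m : ℕ} (M : Mat (2 * m + 1)) : Prop where
  entry_eq_zero_of_lt : ∀ r v, v < r → entry M r v = 0
  entry_eq_zero_of_add : ∀ r v, 2 * m < r + v → entry M r v = 0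
  nzCol_of_lt : ∀ v < m, NzCol M v
  nzRow_or_nzCol : ∀ r < m, NzRow M r ∨ NzCol M (2 * m - r)

lemma isSMat_iff {m : ℕ} (M : Mat (2 * m + 1)) :
    IsSMat M ↔ SuperTri M ∧ (∀ j : Fin (2 * m + 1), (j : ℕ) < m → colNonzero M j) ∧
      (∀ a b : Fin (2 * m + 1), (a : ℕ) < m → (a : ℕ) + (b : ℕ) = 2 * m →
        rowNonzero M a ∨ colNonzero M b) := by
  constructor
  · rintro ⟨hlt, hadd, hcol, hrc⟩
    refine ⟨⟨fun i j h => by simpa using hlt i j h,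
      fun i j h => by simpa using hadd i j (by omega)⟩,
      fun j hj => (nzCol_iff M j).1 (hcol j hj), fun a b ha hab => ?_⟩
    rw [← nzRow_iff, ← nzCol_iff, show (b : ℕ) = 2 * m - a by omega]
    exact hrc a ha
  · rintro ⟨⟨hut, hse⟩, hcol, hrc⟩
    refine ⟨fun r v h => UT.entry_eq_zero hut h, fun r v h => ?_, fun v hv => ?_,
      fun r hr => ?_⟩
    · unfold entry
      split_ifs with hlt
      exacts [hse ⟨r, hlt.1⟩ ⟨v, hlt.2⟩ (show _ < r + v + 1 by omega), rfl]
    · exact (nzCol_iff M ⟨v, by omega⟩).2 (hcol ⟨v, by omega⟩ hv)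
    · have := hrc ⟨r, by omega⟩ ⟨2 * m - r, by omega⟩ hr
        (show r + (2 * m - r) = 2 * m by omega)
      rwa [← nzRow_iff, ← nzCol_iff] at this

structure IsBMat {d : ℕ} (B : Mat d) : Prop where
  entry_eq_zero_of_lt : ∀ x y, y < x → entry B x y = 0
  nzRow : ∀ x, 1 ≤ x → x < d → NzRow B x
  one_le : 1 ≤ d

lemma isBMat_iff {d : ℕ} (B : Mat d) :
    IsBMat B ↔ UT B ∧ (∀ i : Fin d, (i : ℕ) ≠ 0 → rowNonzero B i) ∧ 1 ≤ d := by
  constructor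
  · rintro ⟨hlt, hrow, hd⟩
    exact ⟨fun i j h => by simpa using hlt i j h,
      fun i hi => (nzRow_iff B i).1 (hrow i (by omega) i.isLt), hd⟩
  · rintro ⟨hut, hrow, hd⟩
    exact ⟨fun x y h => UT.entry_eq_zero hut h,
      fun x h1 h2 => (nzRow_iff B ⟨x, h2⟩).2 (hrow ⟨x, h2⟩ (show x ≠ 0 by omega)), hd⟩

section Phi

variable {m : ℕ} (M : Mat (2 * m + 1)) {u v x : ℕ}

lemma isKept_iff : IsKept M v ↔ v ≤ m ∨ NzCol M v := by
  rw [IsKept, show (2 * m + 1) / 2 = m by omega]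

lemma isKey_iff : IsKey M u ↔ u ≤ 2 * m ∧ IsKept M (keyCol m u) := by
  rw [IsKey, show (2 * m + 1) / 2 = m by omega, Nat.lt_succ_iff]

lemma isKey_zero : IsKey M 0 :=
  (isKey_iff M).2 ⟨by omega, (isKept_iff M).2 (Or.inl (by simp [keyCol]))⟩

lemma isKey_odd {c : ℕ} (hc : c < m) : IsKey M (2 * c + 1) :=
  (isKey_iff M).2 ⟨by omega, (isKept_iff M).2 (Or.inl (by rw [keyCol_odd]; omega))⟩

lemma isKey_even {t : ℕ} (h1 : 1 ≤ t) (h2 : t ≤ m) : IsKey M (2 * t) ↔ NzCol M (m + t) := by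
  rw [isKey_iff, isKept_iff, keyCol_even]
  constructor
  · rintro ⟨-, h | h⟩
    exacts [absurd h (by omega), h]
  · exact fun h => ⟨by omega, Or.inr h⟩

lemma isKey_colKey (hv : v ≤ 2 * m) : IsKey M (colKey m v) ↔ IsKept M v := by
  rw [isKey_iff, keyCol_colKey hv]
  exact and_iff_right (colKey_le hv)

lemma phiCol_eq (x : ℕ) : phiCol M x = keyCol m (Nat.nth (IsKey M) x) := by
  rw [phiCol, show (2 * m + 1) / 2 = m by omega]

lemma colPos_eq (v : ℕ) : colPos M v = Nat.count (IsKey M) (colKey m v) := by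
  rw [colPos, show (2 * m + 1) / 2 = m by omega]

lemma slotRow_eq (v : ℕ) : slotRow M v = if NzCol M (2 * m - v) then 2 * m - v else v := by
  rw [slotRow, show (2 * m + 1) / 2 = m by omega]

section KeptColumns

variable {M} (hx : x < numKeys M)
include hx

lemma isKey_nth : IsKey M (Nat.nth (IsKey M) x) := Nat.nth_mem_of_lt_count hx

lemma phiCol_le : phiCol M x ≤ 2 * m := by
  rw [phiCol_eq]
  exact keyCol_le ((isKey_iff M).1 (isKey_nth hx)).1

lemma isKept_phiCol : IsKept M (phiCol M x) := by
  rw [phiCol_eq]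
  exact ((isKey_iff M).1 (isKey_nth hx)).2

lemma colPos_phiCol : colPos M (phiCol M x) = x := by
  rw [colPos_eq, phiCol_eq, colKey_keyCol ((isKey_iff M).1 (isKey_nth hx)).1]
  exact Nat.count_nth_of_lt_count hx

end KeptColumns

section

variable {M} (hv : v ≤ 2 * m) (hk : IsKept M v)
include hv hk

lemma phiCol_colPos : phiCol M (colPos M v) = v := by
  rw [phiCol_eq, colPos_eq, Nat.nth_count ((isKey_colKey M hv).2 hk), keyCol_colKey hv]

lemma colPos_lt : colPos M v < numKeys M := by
  rw [colPos_eq]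
  exact Nat.count_strict_mono ((isKey_colKey M hv).2 hk) (by have := colKey_le hv; omega)

end

lemma sum_range_numKeys_phiCol {β : Type*} [AddCommMonoid β] (F : ℕ → β) :
    ∑ x ∈ range (numKeys M), F (phiCol M x)
      = ∑ v ∈ range (2 * m + 1) with IsKept M v, F v := by
  simp only [phiCol_eq]
  rw [numKeys, Nat.sum_range_count_comp_nth (fun u => F (keyCol m u))]
  refine sum_nbij' (keyCol m) (colKey m) (fun u hu => ?_) (fun v hv => ?_)
    (fun u hu => ?_) (fun v hv => ?_) (fun _ _ => rfl)
  · simp only [mem_filter, mem_range, isKey_iff] at hu ⊢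
    exact ⟨by have := keyCol_le hu.2.1; omega, hu.2.2⟩
  · simp only [mem_filter, mem_range, isKey_iff] at hv ⊢
    exact ⟨by have := colKey_le (m := m) (v := v) (by omega); omega,
      colKey_le (by omega), by rw [keyCol_colKey (by omega)]; exact hv.2⟩
  · simp only [mem_filter, mem_range, isKey_iff] at hu
    exact colKey_keyCol hu.2.1
  · simp only [mem_filter, mem_range] at hv
    exact keyCol_colKey (by omega)

lemma numKeys_pos : 0 < numKeys M := by
  have := Nat.count_strict_mono (isKey_zero M) (show 0 < 2 * m + 1 by omega)
  rwa [Nat.count_zero] at this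

lemma phiCol_zero : phiCol M 0 = m := by
  rw [phiCol_eq, Nat.nth_zero_of_zero (isKey_zero M)]
  simp [keyCol]

lemma phiMat_entry {y : ℕ} (hx : x < numKeys M) (hy : y < numKeys M) :
    entry (phiMat M) x y = entry M (slotRow M (phiCol M y)) (phiCol M x) :=
  dif_pos ⟨hx, hy⟩

lemma entry_eq_zero_of_not_isKept {M : Mat (2 * m + 1)} {r : ℕ} (hv : ¬ IsKept M v) :
    entry M r v = 0 := by
  by_contra h
  exact hv ((isKept_iff M).2 (Or.inr ⟨r, h⟩))

lemma sum_range_numKeys_entry_phiCol (r : ℕ) :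
    ∑ x ∈ range (numKeys M), entry M r (phiCol M x)
      = ∑ v ∈ range (2 * m + 1), entry M r v := by
  rw [sum_range_numKeys_phiCol M (entry M r)]
  exact sum_filter_of_ne fun v _ h => by_contra fun hk => h (entry_eq_zero_of_not_isKept hk)

lemma colPos_rowSlot_zero :
    colPos M (rowSlot M 0) + 1 = numKeys M := by
  rw [colPos_eq, numKeys, rowSlot]
  split_ifs with h
  · have hnk : ¬ IsKey M (2 * m) := by
      rw [isKey_even M h.1 le_rfl, show m + m = 2 * m - 0 by omega]
      exact h.2
    have e := Nat.count_succ (IsKey M) (2 * (m - 1) + 1)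
    rw [show 2 * (m - 1) + 1 + 1 = 2 * m by omega, if_pos (isKey_odd M (by omega))] at e
    rw [colKey_of_lt h.1, Nat.count_succ (n := 2 * m), if_neg hnk, e, zero_add]
  · have hk : IsKey M (2 * m) := by
      rcases Nat.eq_zero_or_pos m with hm | hm
      · simpa [hm] using isKey_zero M
      · rw [isKey_even M hm le_rfl, show m + m = 2 * m - 0 by omega]
        tauto
    rw [Nat.sub_zero, colKey_of_le (by omega), show 2 * (2 * m - m) = 2 * m by omega,
      Nat.count_succ, if_pos hk]

lemma count_two_mul_add_two {c : ℕ} (hc : c < m) :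
    Nat.count (IsKey M) (2 * (c + 1)) = Nat.count (IsKey M) (2 * c + 1) + 1 := by
  rw [show 2 * (c + 1) = 2 * c + 1 + 1 by ring, Nat.count_succ, if_pos (isKey_odd M hc)]

lemma count_two_mul_add_three {c : ℕ} (hc : c < m) :
    Nat.count (IsKey M) (2 * (c + 1) + 1)
      = Nat.count (IsKey M) (2 * c + 1) + if NzCol M (m + 1 + c) then 2 else 1 := by
  have hkey := isKey_even M (t := c + 1) (by omega) (by omega)
  rw [show m + (c + 1) = m + 1 + c by ring] at hkey
  rw [Nat.count_succ, count_two_mul_add_two M hc]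
  by_cases hnz : NzCol M (m + 1 + c)
  · rw [if_pos (hkey.2 hnz), if_pos hnz]
  · rw [if_neg (fun h => hnz (hkey.1 h)), if_neg hnz]

end Phi

namespace IsSMat

variable {m : ℕ} {M : Mat (2 * m + 1)} (H : IsSMat M) {r v w x : ℕ}
include H

lemma entry_eq_zero_of_gt (hr : m < r) : entry M r v = 0 := by
  by_cases hvr : v < r
  · exact H.entry_eq_zero_of_lt r v hvr
  · exact H.entry_eq_zero_of_add r v (by omega)

lemma exists_le_of_nzCol (h : NzCol M v) : ∃ r ≤ m, entry M r v ≠ 0 := by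
  obtain ⟨r, hr⟩ := h
  exact ⟨r, by by_contra h'; exact hr (H.entry_eq_zero_of_gt (by omega)), hr⟩

lemma slotRow_rowSlot (hr : r ≤ m) : slotRow M (rowSlot M r) = r ∧ IsKept M (rowSlot M r) := by
  rw [isKept_iff]
  unfold rowSlot
  split_ifs with h
  · rw [slotRow_eq, if_neg h.2]
    exact ⟨rfl, Or.inl hr⟩
  · rw [slotRow_eq, show 2 * m - (2 * m - r) = r by omega]
    by_cases hrm : r < m
    · have hc : NzCol M (2 * m - r) := by tauto
      exact ⟨if_pos (H.nzCol_of_lt r hrm), Or.inr hc⟩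
    · exact ⟨by split_ifs <;> omega, Or.inl (by omega)⟩

lemma rowSlot_slotRow (hv : v ≤ 2 * m) (hk : IsKept M v) (h : slotRow M v ≤ m) :
    rowSlot M (slotRow M v) = v := by
  rw [isKept_iff] at hk
  rw [slotRow_eq] at h ⊢
  unfold rowSlot
  split_ifs at h ⊢ with h1 h2 h3
  · rw [show 2 * m - (2 * m - v) = v by omega] at h2
    rcases hk with hk | hk
    · omega
    · exact absurd hk h2.2
  · omega
  · rfl
  · by_cases hvm : v < m
    · exact absurd h1 (not_and.mp h3 hvm)
    · by_cases hmv : m < v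
      · exact absurd (H.nzCol_of_lt (2 * m - v) (by omega)) h1
      · omega

lemma sum_range_numKeys_slotRow {β : Type*} [AddCommMonoid β] (F : ℕ → β)
    (hF : ∀ r, m < r → F r = 0) :
    ∑ y ∈ range (numKeys M), F (slotRow M (phiCol M y)) = ∑ r ∈ range (m + 1), F r := by
  rw [sum_range_numKeys_phiCol M (fun v => F (slotRow M v)), ← sum_filter_of_ne
    (p := fun v => slotRow M v ≤ m) (fun v _ h => by by_contra h'; exact h (hF _ (by omega))),
    filter_filter]
  refine sum_nbij' (slotRow M) (rowSlot M) (fun v hv => ?_) (fun r hr => ?_)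
    (fun v hv => ?_) (fun r hr => ?_) (fun _ _ => rfl)
  · simp only [mem_filter, mem_range] at hv ⊢
    omega
  · simp only [mem_filter, mem_range] at hr ⊢
    obtain ⟨h1, h2⟩ := H.slotRow_rowSlot (r := r) (by omega)
    exact ⟨by have := rowSlot_le M r; omega, h2, by rw [h1]; omega⟩
  · simp only [mem_filter, mem_range] at hv
    exact H.rowSlot_slotRow (by omega) hv.2.1 hv.2.2
  · simp only [mem_range] at hr
    exact (H.slotRow_rowSlot (by omega)).1

lemma colKey_le_of_entry_ne_zero (hw : w ≤ 2 * m) (hk : IsKept M v)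
    (h : entry M (slotRow M w) v ≠ 0) : colKey m v ≤ colKey m w := by
  have h1 : slotRow M w ≤ v := by
    by_contra h'; exact h (H.entry_eq_zero_of_lt _ _ (by omega))
  have h2 : slotRow M w + v ≤ 2 * m := by
    by_contra h'; exact h (H.entry_eq_zero_of_add _ _ (by omega))
  rw [isKept_iff] at hk
  rw [slotRow_eq] at h1 h2
  split_ifs at h1 h2 with hc
  · unfold colKey; split_ifs <;> omega
  · rcases hk with hk | hk
    · unfold colKey; split_ifs <;> omega
    · have : v ≠ 2 * m - w := fun he => hc (he ▸ hk)
      unfold colKey; split_ifs <;> omega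

lemma ut_phiMat : UT (phiMat M) := by
  intro x y hyx
  by_contra h
  have hle := H.colKey_le_of_entry_ne_zero (phiCol_le y.isLt) (isKept_phiCol x.isLt) h
  have := Nat.count_monotone (IsKey M) hle
  rw [← colPos_eq, ← colPos_eq, colPos_phiCol x.isLt, colPos_phiCol y.isLt] at this
  omega

lemma nzRow_phiMat (h1 : 1 ≤ x) (hx : x < numKeys M) : NzRow (phiMat M) x := by
  have hcol : NzCol M (phiCol M x) := by
    have hm : phiCol M x ≠ m := fun he => by
      have := colPos_phiCol hx
      rw [he, colPos_eq, colKey_of_le le_rfl] at this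
      simp only [tsub_self, mul_zero, Nat.count_zero] at this
      omega
    rcases (isKept_iff M).1 (isKept_phiCol hx) with h | h
    exacts [H.nzCol_of_lt _ (by omega), h]
  obtain ⟨r, hr, hne⟩ := H.exists_le_of_nzCol hcol
  obtain ⟨hslot, hkept⟩ := H.slotRow_rowSlot hr
  refine ⟨colPos M (rowSlot M r), ?_⟩
  rwa [phiMat_entry M hx (colPos_lt (rowSlot_le M r) hkept), phiCol_colPos (rowSlot_le M r) hkept,
    hslot]

lemma sum_range_numKeys_entry_slotRow (v : ℕ) :
    ∑ y ∈ range (numKeys M), entry M (slotRow M (phiCol M y)) v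
      = ∑ r ∈ range (2 * m + 1), entry M r v := by
  rw [H.sum_range_numKeys_slotRow (entry M · v) fun r hr => H.entry_eq_zero_of_gt hr]
  exact sum_subset (range_subset_range.2 (by omega))
    fun r _ hr => H.entry_eq_zero_of_gt (by simp only [mem_range] at hr; omega)

lemma msize_phiMat : msize (phiMat M) = msize M := by
  rw [msize_eq_sum_entry, msize_eq_sum_entry]
  calc ∑ x ∈ range (numKeys M), ∑ y ∈ range (numKeys M), entry (phiMat M) x y
      = ∑ x ∈ range (numKeys M), ∑ r ∈ range (2 * m + 1), entry M r (phiCol M x) :=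
        sum_congr rfl fun x hx => by
          rw [← H.sum_range_numKeys_entry_slotRow]
          exact sum_congr rfl fun y hy => phiMat_entry M (mem_range.1 hx) (mem_range.1 hy)
    _ = ∑ r ∈ range (2 * m + 1), ∑ x ∈ range (numKeys M), entry M r (phiCol M x) := sum_comm
    _ = ∑ r ∈ range (2 * m + 1), ∑ v ∈ range (2 * m + 1), entry M r v :=
        sum_congr rfl fun r _ => sum_range_numKeys_entry_phiCol M r

lemma firstRowSum_phiMat : firstRowSum (phiMat M) = centerColSum M := by
  rw [firstRowSum_eq_sum_entry, centerColSum_eq_sum_entry, ← H.sum_range_numKeys_entry_slotRow]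
  refine sum_congr rfl fun y hy => ?_
  rw [phiMat_entry M (numKeys_pos M) (mem_range.1 hy), phiCol_zero]

lemma slotRow_phiCol_last : slotRow M (phiCol M (numKeys M - 1)) = 0 := by
  obtain ⟨hslot, hkept⟩ := H.slotRow_rowSlot (Nat.zero_le m)
  rw [← colPos_rowSlot_zero M, Nat.add_sub_cancel, phiCol_colPos (rowSlot_le M 0) hkept, hslot]

lemma lastColSum_phiMat : lastColSum (phiMat M) = firstRowSum M := by
  rw [lastColSum_eq_sum_entry, firstRowSum_eq_sum_entry, ← sum_range_numKeys_entry_phiCol]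
  refine sum_congr rfl fun x hx => ?_
  rw [phiMat_entry M (mem_range.1 hx) (by have := numKeys_pos M; omega), H.slotRow_phiCol_last]

lemma isBMat_phiMat : IsBMat (phiMat M) :=
  ⟨fun _ _ h => UT.entry_eq_zero H.ut_phiMat h, fun _ h1 h2 => H.nzRow_phiMat h1 h2,
    numKeys_pos M⟩

end IsSMat

/-- The row of `B = φ(M)` holding the key `2c + 1`: the key `2c + 2` comes right after it
exactly when column `oddPos B c` of `B` is zero. -/
def oddPos {d : ℕ} (B : Mat d) : ℕ → ℕ
  | 0 => 1
  | c + 1 => oddPos B c + if NzCol B (oddPos B c) then 1 else 2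

section Parse

variable {d : ℕ} (B : Mat d) {c : ℕ}

lemma oddPos_zero : oddPos B 0 = 1 := rfl

lemma oddPos_succ (c : ℕ) :
    oddPos B (c + 1) = oddPos B c + if NzCol B (oddPos B c) then 1 else 2 := rfl

lemma oddPos_strictMono : StrictMono (oddPos B) :=
  strictMono_nat_of_lt_succ fun c => by rw [oddPos_succ]; split_ifs <;> omega

lemma succ_le_oddPos (c : ℕ) : c + 1 ≤ oddPos B c := by
  induction c with
  | zero => exact le_rfl
  | succ c ih => exact (oddPos_strictMono B c.lt_succ_self).trans_le' ih

lemma oddPos_pos (c : ℕ) : 0 < oddPos B c := (succ_le_oddPos B c).trans_lt' c.succ_pos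

lemma exists_le_oddPos : ∃ c, d ≤ oddPos B c := ⟨d, by have := succ_le_oddPos B d; omega⟩

def halfDim : ℕ := Nat.find (exists_le_oddPos B)

lemma oddPos_lt_of_lt_halfDim (hc : c < halfDim B) : oddPos B c < d :=
  not_le.1 (Nat.find_min (exists_le_oddPos B) hc)

variable {B} (H : IsBMat B)
include H

lemma IsBMat.nzCol_last (h2 : 2 ≤ d) : NzCol B (d - 1) := by
  obtain ⟨y, hy⟩ := H.nzRow (d - 1) (by omega) (by omega)
  have hyd := (lt_of_entry_ne_zero B hy).2
  have hy' : y = d - 1 := by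
    by_contra h
    exact hy (H.entry_eq_zero_of_lt _ _ (by omega))
  exact ⟨d - 1, hy' ▸ hy⟩

lemma IsBMat.oddPos_halfDim : oddPos B (halfDim B) = d := by
  have hle : d ≤ oddPos B (halfDim B) := Nat.find_spec (exists_le_oddPos B)
  rcases Nat.eq_zero_or_pos (halfDim B) with h0 | hpos
  · have := H.one_le
    rw [h0, oddPos_zero] at hle ⊢
    omega
  · obtain ⟨c, hc⟩ : ∃ c, halfDim B = c + 1 := ⟨halfDim B - 1, by omega⟩
    have hlt := oddPos_lt_of_lt_halfDim B (show c < halfDim B by omega)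
    rw [hc, oddPos_succ] at hle ⊢
    split_ifs at hle ⊢ with hnz
    · omega
    · have := succ_le_oddPos B c
      have : oddPos B c ≠ d - 1 := fun he => hnz (he ▸ H.nzCol_last (by omega))
      omega

lemma IsBMat.eq_halfDim_of_oddPos_eq (h : oddPos B c = d) : c = halfDim B :=
  (oddPos_strictMono B).injective (h.trans H.oddPos_halfDim.symm)

lemma IsBMat.exists_oddPos_eq {X : ℕ} (h1 : 1 ≤ X) (h2 : X < d) :
    ∃ c < halfDim B, X = oddPos B c ∨ (X = oddPos B c + 1 ∧ ¬ NzCol B (oddPos B c)) := by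
  have hex : ∃ c, X < oddPos B c := ⟨X, by have := succ_le_oddPos B X; omega⟩
  obtain ⟨c, hc⟩ : ∃ c, Nat.find hex = c + 1 := by
    refine ⟨Nat.find hex - 1, ?_⟩
    have : Nat.find hex ≠ 0 := fun h0 => by
      have := Nat.find_spec hex
      rw [h0, oddPos_zero] at this
      omega
    omega
  have hlo : oddPos B c ≤ X := not_lt.1 (Nat.find_min hex (by omega))
  have hhi : X < oddPos B (c + 1) := hc ▸ Nat.find_spec hex
  have hch : c < halfDim B :=
    (oddPos_strictMono B).lt_iff_lt.1 (by rw [H.oddPos_halfDim]; omega)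
  refine ⟨c, hch, ?_⟩
  rw [oddPos_succ] at hhi
  split_ifs at hhi with hnz
  · exact Or.inl (by omega)
  · rcases Nat.eq_or_lt_of_le hlo with he | hlt
    exacts [Or.inl he.symm, Or.inr ⟨by omega, hnz⟩]

end Parse

/-- The row of `B` behind column `v` of `ψ(B)`. -/
def psiRow {d : ℕ} (B : Mat d) (v : ℕ) : ℕ :=
  if v < halfDim B then oddPos B (halfDim B - (v + 1))
  else if v = halfDim B then 0 else oddPos B (v - halfDim B - 1) + 1

/-- The column of `B` behind row `r` of `ψ(B)`. -/
def psiCol {d : ℕ} (B : Mat d) (r : ℕ) : ℕ :=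
  if r = halfDim B then 0 else oddPos B (halfDim B - r) - 1

/-- Column `halfDim B + 1 + c` of `ψ(B)` is kept exactly when the key `2c + 2` was. -/
def PsiKept {d : ℕ} (B : Mat d) (v : ℕ) : Prop :=
  v ≤ halfDim B ∨ ¬ NzCol B (oddPos B (v - halfDim B - 1))

def psiMat {d : ℕ} (B : Mat d) : Mat (2 * halfDim B + 1) := fun r v =>
  if (r : ℕ) ≤ v ∧ (v : ℕ) + r ≤ 2 * halfDim B ∧ PsiKept B v
  then entry B (psiRow B v) (psiCol B r) else 0

def psi (A : SMat) : SMat := ⟨2 * halfDim A.2 + 1, psiMat A.2⟩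

section Psi

variable {d : ℕ} (B : Mat d) {r v : ℕ}

lemma psiMat_entry (r v : ℕ) : entry (psiMat B) r v =
    if r ≤ v ∧ v + r ≤ 2 * halfDim B ∧ PsiKept B v
    then entry B (psiRow B v) (psiCol B r) else 0 := by
  by_cases h : r < 2 * halfDim B + 1 ∧ v < 2 * halfDim B + 1
  · exact dif_pos h
  · rw [entry, dif_neg h, if_neg (by omega)]

lemma psiRow_pos (hv : v ≠ halfDim B) : 1 ≤ psiRow B v := by
  unfold psiRow
  split_ifs
  · exact oddPos_pos B _
  · omega

lemma psiRow_of_gt (hv : halfDim B < v) :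
    psiRow B v = oddPos B (v - halfDim B - 1) + 1 := by
  rw [psiRow, if_neg (by omega), if_neg (by omega)]

lemma psiCol_of_lt (hr : r < halfDim B) : psiCol B r = oddPos B (halfDim B - r) - 1 := by
  rw [psiCol, if_neg (by omega)]

lemma psiCol_lt_psiRow (hr : r ≤ halfDim B) (hbad : v < r ∨ 2 * halfDim B < v + r) :
    psiCol B r < psiRow B v := by
  have hmono := (oddPos_strictMono B).monotone
  unfold psiRow psiCol
  split_ifs with h1 h2 h3 h4 h5
  · exact oddPos_pos B _
  · omega
  · omega
  · have := succ_le_oddPos B (halfDim B - r)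
    have := hmono (show halfDim B - r ≤ halfDim B - (v + 1) by omega)
    omega
  · omega
  · have := hmono (show halfDim B - r ≤ v - halfDim B - 1 by omega)
    omega

variable {B} (H : IsBMat B)
include H

lemma IsBMat.psiRow_lt (hv : v ≤ 2 * halfDim B) (hk : PsiKept B v) : psiRow B v < d := by
  have hd := H.oddPos_halfDim
  unfold psiRow
  split_ifs with h1 h2
  · exact oddPos_lt_of_lt_halfDim B (by omega)
  · exact H.one_le
  · have hnz := hk.resolve_left (by omega)
    have hs := oddPos_succ B (v - halfDim B - 1)
    have := (oddPos_strictMono B).monotone (show v - halfDim B - 1 + 1 ≤ halfDim B by omega)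
    rw [if_neg hnz] at hs
    omega

lemma IsBMat.entry_psiMat (hr : r ≤ halfDim B) (hk : PsiKept B v) :
    entry (psiMat B) r v = entry B (psiRow B v) (psiCol B r) := by
  rw [psiMat_entry]
  by_cases hreg : r ≤ v ∧ v + r ≤ 2 * halfDim B
  · rw [if_pos ⟨hreg.1, hreg.2, hk⟩]
  · rw [if_neg (fun h => hreg ⟨h.1, h.2.1⟩)]
    exact (H.entry_eq_zero_of_lt _ _ (psiCol_lt_psiRow B hr (by omega))).symm

lemma IsBMat.exists_psiCol_eq {Y : ℕ} (hY : Y < d) (hnz : NzCol B Y) :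
    ∃ r ≤ halfDim B, psiCol B r = Y := by
  rcases Nat.eq_zero_or_pos Y with rfl | hY1
  · exact ⟨halfDim B, le_rfl, by simp [psiCol]⟩
  obtain ⟨c, hc, hcase⟩ := H.exists_oddPos_eq hY1 hY
  refine ⟨halfDim B - (c + 1), by omega, ?_⟩
  rw [psiCol_of_lt B (by omega), show halfDim B - (halfDim B - (c + 1)) = c + 1 by omega,
    oddPos_succ]
  rcases hcase with rfl | ⟨rfl, hz⟩
  · rw [if_pos hnz]; omega
  · rw [if_neg hz]; omega

lemma IsBMat.exists_psiRow_eq {X : ℕ} (hX : X < d) :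
    ∃ v ≤ 2 * halfDim B, PsiKept B v ∧ psiRow B v = X := by
  rcases Nat.eq_zero_or_pos X with rfl | hX1
  · exact ⟨halfDim B, by omega, Or.inl le_rfl, by simp [psiRow]⟩
  obtain ⟨c, hc, hcase⟩ := H.exists_oddPos_eq hX1 hX
  rcases hcase with rfl | ⟨rfl, hz⟩
  · refine ⟨halfDim B - (c + 1), by omega, Or.inl (by omega), ?_⟩
    rw [psiRow, if_pos (by omega), show halfDim B - (halfDim B - (c + 1) + 1) = c by omega]
  · refine ⟨halfDim B + 1 + c, by omega, Or.inr ?_, ?_⟩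
    · rwa [show halfDim B + 1 + c - halfDim B - 1 = c by omega]
    · rw [psiRow_of_gt B (by omega), show halfDim B + 1 + c - halfDim B - 1 = c by omega]

lemma IsBMat.nzCol_psiMat (hv : v ≤ 2 * halfDim B) (hk : PsiKept B v) (hvh : v ≠ halfDim B) :
    NzCol (psiMat B) v := by
  obtain ⟨Y, hY⟩ := H.nzRow _ (psiRow_pos B hvh) (H.psiRow_lt hv hk)
  obtain ⟨r, hr, rfl⟩ := H.exists_psiCol_eq (lt_of_entry_ne_zero B hY).2 ⟨_, hY⟩
  exact ⟨r, by rwa [H.entry_psiMat hr hk]⟩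

lemma IsBMat.nzCol_psiMat_iff {c : ℕ} (hc : c < halfDim B) :
    NzCol (psiMat B) (halfDim B + 1 + c) ↔ ¬ NzCol B (oddPos B c) := by
  have hsub : halfDim B + 1 + c - halfDim B - 1 = c := by omega
  constructor
  · rintro ⟨r, hr⟩
    rw [psiMat_entry] at hr
    split_ifs at hr with hreg
    · have := hreg.2.2.resolve_left (by omega)
      rwa [hsub] at this
    · exact absurd rfl hr
  · intro hz
    exact H.nzCol_psiMat (by omega) (Or.inr (by rwa [hsub])) (by omega)

lemma IsBMat.isSMat_psiMat : IsSMat (psiMat B) where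
  entry_eq_zero_of_lt r v h := by rw [psiMat_entry, if_neg (by omega)]
  entry_eq_zero_of_add r v h := by rw [psiMat_entry, if_neg (by omega)]
  nzCol_of_lt v hv := H.nzCol_psiMat (by omega) (Or.inl hv.le) (by omega)
  nzRow_or_nzCol r hr := by
    by_cases hz : NzCol B (oddPos B (halfDim B - (r + 1)))
    · left
      obtain ⟨X, hX⟩ := hz
      obtain ⟨v, -, hk, hXv⟩ := H.exists_psiRow_eq (lt_of_entry_ne_zero B hX).1
      refine ⟨v, ?_⟩
      rwa [H.entry_psiMat hr.le hk, hXv, psiCol_of_lt B hr,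
        show halfDim B - r = halfDim B - (r + 1) + 1 by omega, oddPos_succ, if_pos ⟨X, hX⟩,
        Nat.add_sub_cancel]
    · right
      rw [show 2 * halfDim B - r = halfDim B + 1 + (halfDim B - (r + 1)) by omega,
        H.nzCol_psiMat_iff (by omega)]
      exact hz

end Psi

/-- The parse of `B` recovers the keys of `M`. -/
structure KeysAgree {m d : ℕ} (M : Mat (2 * m + 1)) (B : Mat d) : Prop where
  halfDim_eq : halfDim B = m
  oddPos_eq : ∀ c ≤ m, oddPos B c = Nat.count (IsKey M) (2 * c + 1)

lemma oddPos_eq_count_of_nzCol_iff {m d : ℕ} {M : Mat (2 * m + 1)} {B : Mat d}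
    (h : ∀ c < m, oddPos B c = Nat.count (IsKey M) (2 * c + 1) →
      (NzCol B (oddPos B c) ↔ ¬ NzCol M (m + 1 + c))) :
    ∀ c ≤ m, oddPos B c = Nat.count (IsKey M) (2 * c + 1) := by
  intro c
  induction c with
  | zero => intro _; simp [oddPos_zero, Nat.count_succ, isKey_zero M]
  | succ c ih =>
    intro hc
    have ih := ih (by omega)
    rw [oddPos_succ, count_two_mul_add_three M (by omega), ← ih]
    by_cases hnz : NzCol M (m + 1 + c)
    · rw [if_pos hnz, if_neg (fun hB => (h c (by omega) ih).1 hB hnz)]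
    · rw [if_neg hnz, if_pos ((h c (by omega) ih).2 hnz)]

namespace KeysAgree

variable {m d : ℕ} {M : Mat (2 * m + 1)} {B : Mat d} (K : KeysAgree M B) {c r v : ℕ}
include K

lemma nzCol_iff (hc : c < m) : NzCol B (oddPos B c) ↔ ¬ NzCol M (m + 1 + c) := by
  have h := K.oddPos_eq (c + 1) (by omega)
  have h0 := K.oddPos_eq c hc.le
  rw [oddPos_succ, count_two_mul_add_three M hc] at h
  constructor
  · intro hB hM
    rw [if_pos hB, if_pos hM] at h
    omega
  · intro hM
    by_contra hB
    rw [if_neg hB, if_neg hM] at h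
    omega

lemma psiKept_iff (hv : v ≤ 2 * m) : PsiKept B v ↔ IsKept M v := by
  rw [PsiKept, isKept_iff, K.halfDim_eq]
  by_cases hvm : v ≤ m
  · simp [hvm]
  · rw [K.nzCol_iff (by omega), not_not, show m + 1 + (v - m - 1) = v by omega]

lemma psiRow_eq (hv : v ≤ 2 * m) (hk : IsKept M v) : psiRow B v = colPos M v := by
  rw [psiRow, K.halfDim_eq, colPos_eq]
  split_ifs with h1 h2
  · rw [colKey_of_lt h1, K.oddPos_eq _ (by omega)]
  · simp [h2, colKey_of_le]
  · obtain ⟨c, rfl⟩ : ∃ c, v = m + 1 + c := ⟨v - m - 1, by omega⟩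
    rw [colKey_of_le (by omega), show m + 1 + c - m = c + 1 by omega,
      Nat.add_sub_cancel, count_two_mul_add_two M (by omega),
      K.oddPos_eq _ (by omega)]

lemma psiCol_eq (hr : r ≤ m) : psiCol B r = colPos M (rowSlot M r) := by
  rw [psiCol, K.halfDim_eq, colPos_eq, rowSlot]
  split_ifs with h1 h2 h2
  · omega
  · rw [h1, show 2 * m - m = m by omega, colKey_of_le le_rfl, Nat.sub_self, mul_zero,
      Nat.count_zero]
  · obtain ⟨c, hc, rfl⟩ : ∃ c < m, r = m - (c + 1) := ⟨m - (r + 1), by omega, by omega⟩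
    rw [colKey_of_lt h2.1, show m - (m - (c + 1)) = c + 1 by omega, K.oddPos_eq _ (by omega),
      count_two_mul_add_three M (by omega), show m + 1 + c = 2 * m - (m - (c + 1)) by omega,
      if_neg h2.2, show m - (m - (c + 1) + 1) = c by omega]
    rfl
  · obtain ⟨c, hc, rfl⟩ : ∃ c < m, r = m - (c + 1) := ⟨m - (r + 1), by omega, by omega⟩
    have hnz : NzCol M (m + 1 + c) := by
      rw [show m + 1 + c = 2 * m - (m - (c + 1)) by omega]
      by_contra h
      exact h2 ⟨by omega, h⟩
    rw [colKey_of_le (by omega), show 2 * m - (m - (c + 1)) - m = c + 1 by omega,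
      show m - (m - (c + 1)) = c + 1 by omega, K.oddPos_eq _ (by omega),
      count_two_mul_add_three M (by omega), count_two_mul_add_two M (by omega), if_pos hnz]
    rfl

end KeysAgree

namespace IsSMat

variable {m : ℕ} {M : Mat (2 * m + 1)} (H : IsSMat M)
include H

lemma nzCol_phiMat_iff {c : ℕ} (hc : c < m) :
    NzCol (phiMat M) (Nat.count (IsKey M) (2 * c + 1)) ↔ ¬ NzCol M (m + 1 + c) := by
  have hv : m - (c + 1) ≤ 2 * m := by omega
  have hk : IsKept M (m - (c + 1)) := (isKept_iff M).2 (Or.inl (by omega))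
  have hpos : Nat.count (IsKey M) (2 * c + 1) = colPos M (m - (c + 1)) := by
    rw [colPos_eq, colKey_of_lt (by omega), show m - (m - (c + 1) + 1) = c by omega]
  have hslot : slotRow M (m - (c + 1))
      = if NzCol M (m + 1 + c) then m + 1 + c else m - (c + 1) := by
    rw [slotRow_eq, show 2 * m - (m - (c + 1)) = m + 1 + c by omega]
  rw [hpos]
  constructor
  · rintro ⟨x, hx⟩ hnz
    have hxd := (lt_of_entry_ne_zero _ hx).1
    rw [phiMat_entry M hxd (colPos_lt hv hk), phiCol_colPos hv hk, hslot, if_pos hnz] at hx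
    exact hx (H.entry_eq_zero_of_gt (by omega))
  · intro hz
    have hrow : NzRow M (m - (c + 1)) := by
      have := H.nzRow_or_nzCol (m - (c + 1)) (by omega)
      rwa [show 2 * m - (m - (c + 1)) = m + 1 + c by omega, or_iff_left hz] at this
    obtain ⟨w, hw⟩ := hrow
    have hwv : w ≤ 2 * m := by have := (lt_of_entry_ne_zero M hw).2; omega
    have hwk : IsKept M w := (isKept_iff M).2 (Or.inr ⟨_, hw⟩)
    refine ⟨colPos M w, ?_⟩
    rwa [phiMat_entry M (colPos_lt hwv hwk) (colPos_lt hv hk), phiCol_colPos hv hk,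
      phiCol_colPos hwv hwk, hslot, if_neg hz]

lemma keysAgree_phiMat : KeysAgree M (phiMat M) := by
  have hodd : ∀ c ≤ m, oddPos (phiMat M) c = Nat.count (IsKey M) (2 * c + 1) :=
    oddPos_eq_count_of_nzCol_iff fun c hc h => by rw [h, H.nzCol_phiMat_iff hc]
  exact ⟨(H.isBMat_phiMat.eq_halfDim_of_oddPos_eq (hodd m le_rfl)).symm, hodd⟩

lemma entry_psiMat_phiMat (r v : ℕ) : entry (psiMat (phiMat M)) r v = entry M r v := by
  have K := H.keysAgree_phiMat
  rw [psiMat_entry, K.halfDim_eq]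
  by_cases hreg : r ≤ v ∧ v + r ≤ 2 * m ∧ IsKept M v
  · obtain ⟨hrv, hvr, hk⟩ := hreg
    have hv : v ≤ 2 * m := by omega
    obtain ⟨hslot, hkr⟩ := H.slotRow_rowSlot (show r ≤ m by omega)
    rw [if_pos ⟨hrv, hvr, (K.psiKept_iff hv).2 hk⟩, K.psiRow_eq hv hk, K.psiCol_eq (by omega),
      phiMat_entry M (colPos_lt hv hk) (colPos_lt (rowSlot_le M r) hkr), phiCol_colPos hv hk,
      phiCol_colPos (rowSlot_le M r) hkr, hslot]
  · rw [if_neg fun h => hreg ⟨h.1, h.2.1, (K.psiKept_iff (by omega)).1 h.2.2⟩]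
    symm
    by_cases hrv : v < r
    · exact H.entry_eq_zero_of_lt r v hrv
    by_cases hvr : 2 * m < v + r
    · exact H.entry_eq_zero_of_add r v (by omega)
    exact entry_eq_zero_of_not_isKept fun hk => hreg ⟨by omega, by omega, hk⟩

lemma psi_phi : psi (phi ⟨2 * m + 1, M⟩) = ⟨2 * m + 1, M⟩ :=
  sigma_mk_eq_of_entry (by simp [phi, H.keysAgree_phiMat.halfDim_eq]) H.entry_psiMat_phiMat

end IsSMat

namespace IsBMat

variable {d : ℕ} {B : Mat d} (H : IsBMat B)
include H

lemma keysAgree_psiMat : KeysAgree (psiMat B) B :=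
  ⟨rfl, oddPos_eq_count_of_nzCol_iff fun c hc _ => by rw [H.nzCol_psiMat_iff hc, not_not]⟩

lemma numKeys_psiMat : numKeys (psiMat B) = d :=
  (H.keysAgree_psiMat.oddPos_eq _ le_rfl).symm.trans H.oddPos_halfDim

lemma entry_phiMat_psiMat (X Y : ℕ) : entry (phiMat (psiMat B)) X Y = entry B X Y := by
  have K := H.keysAgree_psiMat
  have S := H.isSMat_psiMat
  have hd := H.numKeys_psiMat
  by_cases hXY : X < d ∧ Y < d
  swap
  · rw [entry_eq_zero_of_le _ (by omega), entry_eq_zero_of_le B (by omega)]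
  obtain ⟨hX, hY⟩ := hXY
  obtain ⟨v, hv, hk, rfl⟩ := H.exists_psiRow_eq hX
  have hkM := (K.psiKept_iff hv).1 hk
  have hY' : Y < numKeys (psiMat B) := by omega
  rw [phiMat_entry _ (by omega) hY', K.psiRow_eq hv hkM, phiCol_colPos hv hkM]
  set w := phiCol (psiMat B) Y
  have hYw : colPos (psiMat B) w = Y := colPos_phiCol hY'
  by_cases hr : slotRow (psiMat B) w ≤ halfDim B
  · rw [H.entry_psiMat hr hk, K.psiCol_eq hr,
      S.rowSlot_slotRow (phiCol_le hY') (isKept_phiCol hY') hr, hYw, K.psiRow_eq hv hkM]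
  -- the slot of `w` holds a zero row, and no row of `ψ(B)` comes from column `Y` of `B`
  rw [S.entry_eq_zero_of_gt (by omega)]
  symm
  by_contra hne
  obtain ⟨r, hrh, hrY⟩ := H.exists_psiCol_eq hY ⟨_, hne⟩
  obtain ⟨hslot, hkr⟩ := S.slotRow_rowSlot hrh
  rw [K.psiCol_eq hrh, ← hYw] at hrY
  have := congrArg (phiCol (psiMat B)) hrY
  rw [phiCol_colPos (rowSlot_le _ r) hkr, phiCol_colPos (phiCol_le hY') (isKept_phiCol hY')] at this
  exact hr (by rw [show w = rowSlot (psiMat B) r from this.symm, hslot]; exact hrh)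

lemma phi_psi : phi (psi ⟨d, B⟩) = ⟨d, B⟩ :=
  sigma_mk_eq_of_entry H.numKeys_psiMat H.entry_phiMat_psiMat

end IsBMat

lemma mem_SMset_iff_s4 {m n : ℕ} (M : Mat (2 * m + 1)) :
    (⟨2 * m + 1, M⟩ : SMat) ∈ SMset n ↔ IsSMat M ∧ msize M = n := by
  rw [isSMat_iff]
  constructor
  · rintro ⟨hst, hsz, k, hk, hcol, hrc⟩
    obtain rfl : k = m := by simp only at hk; omega
    exact ⟨⟨hst, hcol, hrc⟩, hsz⟩
  · rintro ⟨⟨hst, hcol, hrc⟩, hsz⟩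
    exact ⟨hst, hsz, m, rfl, hcol, hrc⟩

lemma exists_eq_of_mem_SMset {n : ℕ} {A : SMat} (hA : A ∈ SMset n) :
    ∃ m, ∃ M : Mat (2 * m + 1), A = ⟨2 * m + 1, M⟩ := by
  obtain ⟨d, M⟩ := A
  obtain ⟨-, -, m, rfl, -⟩ := hA
  exact ⟨m, M, rfl⟩

lemma isBMat_of_mem_Bset {n d : ℕ} (hn : 1 ≤ n) {B : Mat d} (hB : ⟨d, B⟩ ∈ Bset n) :
    IsBMat B := by
  obtain ⟨hut, hrow, hsz⟩ := hB
  refine (isBMat_iff B).2 ⟨hut, hrow, Nat.pos_of_ne_zero ?_⟩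
  rintro rfl
  simp only [msize, univ_eq_empty, sum_empty] at hsz
  omega

variable {n k p : ℕ}

lemma phi_mapsTo : Set.MapsTo phi (SMset₃ n k p) (Bset₃ n k p) := by
  rintro A ⟨hA, hk, hp⟩
  obtain ⟨m, M, rfl⟩ := exists_eq_of_mem_SMset hA
  obtain ⟨H, hsz⟩ := (mem_SMset_iff_s4 M).1 hA
  obtain ⟨hut, hrow, -⟩ := (isBMat_iff _).1 H.isBMat_phiMat
  exact ⟨⟨hut, hrow, H.msize_phiMat.trans hsz⟩, H.firstRowSum_phiMat.trans hp,
    H.lastColSum_phiMat.trans hk⟩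

lemma psi_mapsTo (hn : 1 ≤ n) : Set.MapsTo psi (Bset₃ n k p) (SMset₃ n k p) := by
  rintro ⟨d, B⟩ ⟨hB, hp, hk⟩
  have H := isBMat_of_mem_Bset hn hB
  have S := H.isSMat_psiMat
  -- the statistics of `ψ(B)` are those of `φ(ψ(B)) = B`
  have hstat (f : ∀ {d}, Mat d → ℕ) : f (phiMat (psiMat B)) = f B :=
    congrArg (fun A : SMat => f A.2) H.phi_psi
  exact ⟨(mem_SMset_iff_s4 _).2 ⟨S, S.msize_phiMat.symm.trans ((hstat msize).trans hB.2.2)⟩,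
    S.lastColSum_phiMat.symm.trans ((hstat lastColSum).trans hk),
    S.firstRowSum_phiMat.symm.trans ((hstat firstRowSum).trans hp)⟩

theorem phi_bijOn (hn : 1 ≤ n) : Set.BijOn phi (SMset₃ n k p) (Bset₃ n k p) := by
  refine Set.InvOn.bijOn ⟨fun A hA => ?_, fun A hA => ?_⟩ phi_mapsTo (psi_mapsTo hn)
  · obtain ⟨m, M, rfl⟩ := exists_eq_of_mem_SMset hA.1
    exact ((mem_SMset_iff_s4 M).1 hA.1).1.psi_phi
  · obtain ⟨d, B⟩ := A
    exact (isBMat_of_mem_Bset hn hA.1).phi_psi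

end

end SelfDualFishburn

/-- `|SM(n,k,p)| = |B(n,k,p)|` for all `n ≥ 1`, `k ≥ 0`, `p ≥ 0`. -/
theorem stmt4 (n k p : ℕ) (hn : 1 ≤ n) :
    (SMset₃ n k p).ncard = (Bset₃ n k p).ncard :=
  (SelfDualFishburn.phi_bijOn hn).ncard_eq
end

section
/- For every n ≥ 1, the number of upper-triangular matrices of nonnegative integers of size n in which every row except possibly the first contains a nonzero entry is twice the number of row-Fishburn matrices of size n; that is, |B(n)| = 2|RM(n)|. -/
open Finset

/- ## Auxiliary material for statement 5 -/

lemma entry_le_msize {m : ℕ} (M : Mat m) (i j : Fin m) : M i j ≤ msize M := by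
  unfold msize
  calc M i j ≤ ∑ j, M i j :=
        Finset.single_le_sum (fun _ _ => Nat.zero_le _) (mem_univ j)
    _ ≤ _ := Finset.single_le_sum (f := fun i => ∑ j, M i j)
        (fun _ _ => Nat.zero_le _) (mem_univ i)

lemma dim_le_msize {m : ℕ} (M : Mat m)
    (h : ∀ i : Fin m, (i : ℕ) ≠ 0 → rowNonzero M i) : m ≤ msize M + 1 := by
  cases m with
  | zero => omega
  | succ m' =>
    have key : ∀ i : Fin (m' + 1),
        (if (i : ℕ) = 0 then 0 else 1) ≤ ∑ j, M i j := by
      intro i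
      by_cases hi : (i : ℕ) = 0
      · simp [hi]
      · obtain ⟨j, hj⟩ := h i hi
        have h1 : 1 ≤ M i j := Nat.one_le_iff_ne_zero.mpr hj
        calc (if (i : ℕ) = 0 then 0 else 1) = 1 := by simp [hi]
          _ ≤ M i j := h1
          _ ≤ ∑ j, M i j :=
              Finset.single_le_sum (fun _ _ => Nat.zero_le _) (mem_univ j)
    have h1 : ∑ i : Fin (m' + 1), (if (i : ℕ) = 0 then 0 else 1) ≤ msize M :=
      Finset.sum_le_sum fun i _ => key i
    have h2 : ∑ i : Fin (m' + 1), (if (i : ℕ) = 0 then 0 else 1) = m' := by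
      rw [Fin.sum_univ_succ]
      simp
    omega

lemma bset_finite (n : ℕ) : (Bset n).Finite := by
  have hsub : Bset n ⊆ Set.range
      (fun p : (Σ m : Fin (n + 2), Matrix (Fin (m : ℕ)) (Fin (m : ℕ)) (Fin (n + 1))) =>
        (⟨(p.1 : ℕ), fun i j => ((p.2 i j : ℕ))⟩ : SMat)) := by
    rintro ⟨m, M⟩ ⟨hUT, hrow, hsize⟩
    dsimp only at hUT hrow hsize
    have hm : m < n + 2 := by
      have := dim_le_msize M hrow
      omega
    refine ⟨⟨⟨m, hm⟩, fun i j => ⟨M i j, ?_⟩⟩, ?_⟩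
    · have := entry_le_msize M i j
      omega
    · rfl
  exact Set.Finite.subset (Set.finite_range _) hsub

/-- Extend a matrix by a zero first row and zero first column. -/
def ext0 {m : ℕ} (M : Mat m) : Mat (m + 1) := fun i j =>
  if h : (i : ℕ) = 0 ∨ (j : ℕ) = 0 then 0
  else M ⟨(i : ℕ) - 1, by have := i.isLt; omega⟩ ⟨(j : ℕ) - 1, by have := j.isLt; omega⟩

lemma succ_mk {m : ℕ} (i : Fin (m + 1)) (hi : (i : ℕ) ≠ 0) (h : (i : ℕ) - 1 < m) :
    (⟨(i : ℕ) - 1, h⟩ : Fin m).succ = i := by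
  apply Fin.ext
  simp only [Fin.val_succ]
  omega

lemma ext0_succ {m : ℕ} (M : Mat m) (i j : Fin m) : ext0 M i.succ j.succ = M i j := by
  unfold ext0
  rw [dif_neg (by simp)]
  congr 1

lemma ext0_row0 {m : ℕ} (M : Mat m) (j : Fin (m + 1)) : ext0 M 0 j = 0 := by
  simp [ext0]

lemma ext0_col0 {m : ℕ} (M : Mat m) (i : Fin (m + 1)) : ext0 M i 0 = 0 := by
  simp [ext0]

lemma msize_ext0 {m : ℕ} (M : Mat m) : msize (ext0 M) = msize M := by
  unfold msize
  rw [Fin.sum_univ_succ]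
  have h0 : ∑ j : Fin (m + 1), ext0 M 0 j = 0 :=
    Finset.sum_eq_zero fun j _ => ext0_row0 M j
  rw [h0, zero_add]
  refine Finset.sum_congr rfl fun i _ => ?_
  rw [Fin.sum_univ_succ, ext0_col0, zero_add]
  exact Finset.sum_congr rfl fun j _ => ext0_succ M i j

/-- The embedding of `SMat` prepending a zero row and column. -/
def emb (A : SMat) : SMat := ⟨A.1 + 1, ext0 A.2⟩

lemma emb_injective : Function.Injective emb := by
  rintro ⟨m₁, M₁⟩ ⟨m₂, M₂⟩ h
  unfold emb at h
  dsimp only at h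
  obtain ⟨h1, h2⟩ := Sigma.mk.inj_iff.mp h
  have hm : m₁ = m₂ := by omega
  subst hm
  have hM : ext0 M₁ = ext0 M₂ := eq_of_heq h2
  have hMM : M₁ = M₂ := by
    funext i j
    have := congrFun (congrFun hM i.succ) j.succ
    rwa [ext0_succ, ext0_succ] at this
  rw [hMM]

lemma zero_part_eq_image (n : ℕ) :
    {A : SMat | A ∈ Bset n ∧ ¬ (∀ i, rowNonzero A.2 i)} = emb '' RMset n := by
  ext ⟨m, M⟩
  constructor
  · rintro ⟨⟨hUT, hrow, hsize⟩, hnot⟩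
    dsimp only at hUT hrow hsize hnot
    -- there is a zero row, which must be row 0; so m ≥ 1
    have hex : ∃ i : Fin m, ∀ j, M i j = 0 := by
      by_contra hc
      push_neg at hc
      exact hnot fun i => hc i
    obtain ⟨i0, hi0⟩ := hex
    have hi0v : (i0 : ℕ) = 0 := by
      by_contra hne
      obtain ⟨j, hj⟩ := hrow i0 hne
      exact hj (hi0 j)
    cases m with
    | zero => exact absurd i0.isLt (by omega)
    | succ m' =>
      have hi0' : i0 = 0 := Fin.ext hi0v
      subst hi0'
      refine ⟨⟨m', fun i j => M i.succ j.succ⟩, ⟨?_, ?_, ?_⟩, ?_⟩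
      · -- UT
        intro i j hij
        exact hUT i.succ j.succ (by simpa using hij)
      · -- rows nonzero
        intro i
        obtain ⟨j, hj⟩ := hrow i.succ (by simp)
        have hjv : (j : ℕ) ≠ 0 := by
          intro h0
          have hj0 : j = 0 := Fin.ext h0
          subst hj0
          exact hj (hUT i.succ 0 (by simp))
        have hjb : (j : ℕ) - 1 < m' := by have := j.isLt; omega
        refine ⟨⟨(j : ℕ) - 1, hjb⟩, ?_⟩
        show M _ _ ≠ 0
        rw [succ_mk j hjv hjb]
        exact hj
      · -- size
        show msize _ = n
        rw [← hsize]
        unfold msize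
        rw [Fin.sum_univ_succ]
        have h0 : ∑ j : Fin (m' + 1), M 0 j = 0 :=
          Finset.sum_eq_zero fun j _ => hi0 j
        rw [h0, zero_add]
        refine (Finset.sum_congr rfl fun i _ => ?_).symm
        show ∑ j : Fin (m' + 1), M i.succ j = _
        rw [Fin.sum_univ_succ]
        have hc0 : M i.succ 0 = 0 := hUT i.succ 0 (by simp)
        rw [hc0, zero_add]
      · -- emb gives back M
        unfold emb
        show (⟨m' + 1, ext0 _⟩ : SMat) = ⟨m' + 1, M⟩
        congr 1
        funext i j
        by_cases hi : (i : ℕ) = 0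
        · rw [show i = 0 from Fin.ext hi, ext0_row0]
          exact (hi0 j).symm
        · by_cases hj : (j : ℕ) = 0
          · rw [show j = 0 from Fin.ext hj, ext0_col0]
            refine (hUT i 0 ?_).symm
            simp only [Fin.val_zero]
            omega
          · have hib : (i : ℕ) - 1 < m' := by have := i.isLt; omega
            have hjb : (j : ℕ) - 1 < m' := by have := j.isLt; omega
            rw [← succ_mk i hi hib, ← succ_mk j hj hjb, ext0_succ]
  · rintro ⟨⟨m', M'⟩, ⟨hUT, hrow, hsize⟩, heq⟩
    dsimp only at hUT hrow hsize
    rw [← heq]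
    simp only [emb]
    refine ⟨⟨?_, ?_, ?_⟩, ?_⟩
    · -- UT of ext0
      intro i j hij
      show ext0 M' i j = 0
      have hi : (i : ℕ) ≠ 0 := by omega
      by_cases hj : (j : ℕ) = 0
      · rw [show j = 0 from Fin.ext hj, ext0_col0]
      · have hib : (i : ℕ) - 1 < m' := by
          have h2 : (i : ℕ) < m' + 1 := i.isLt; omega
        have hjb : (j : ℕ) - 1 < m' := by
          have h2 : (j : ℕ) < m' + 1 := j.isLt; omega
        rw [← succ_mk i hi hib, ← succ_mk j hj hjb, ext0_succ]
        exact hUT _ _ (by simp only []; omega)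
    · -- rows except first nonzero
      intro i hi
      dsimp only at i hi ⊢
      have hib : (i : ℕ) - 1 < m' := by
        have h2 : (i : ℕ) < m' + 1 := i.isLt; omega
      obtain ⟨j, hj⟩ := hrow ⟨(i : ℕ) - 1, hib⟩
      refine ⟨j.succ, ?_⟩
      show ext0 M' i j.succ ≠ 0
      rw [← succ_mk i hi hib, ext0_succ]
      exact hj
    · show msize _ = n
      rw [msize_ext0]
      exact hsize
    · -- not all rows nonzero
      intro hall
      obtain ⟨j, hj⟩ := hall 0
      exact hj (ext0_row0 M' j)

lemma rmset_subset_bset (n : ℕ) : RMset n ⊆ Bset n := by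
  rintro ⟨m, M⟩ ⟨hUT, hrow, hsize⟩
  exact ⟨hUT, fun i _ => hrow i, hsize⟩

lemma bset_split (n : ℕ) :
    Bset n = RMset n ∪ {A : SMat | A ∈ Bset n ∧ ¬ (∀ i, rowNonzero A.2 i)} := by
  ext ⟨m, M⟩
  constructor
  · intro hA
    by_cases h : ∀ i, rowNonzero M i
    · exact Or.inl ⟨hA.1, h, hA.2.2⟩
    · exact Or.inr ⟨hA, h⟩
  · rintro (hA | hA)
    · exact rmset_subset_bset n hA
    · exact hA.1

/-- `|B(n)| = 2 |RM(n)|` for all `n ≥ 1`. -/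
theorem stmt5 (n : ℕ) (hn : 1 ≤ n) :
    (Bset n).ncard = 2 * (RMset n).ncard := by
  have hBfin := bset_finite n
  have hRMfin : (RMset n).Finite := hBfin.subset (rmset_subset_bset n)
  have hZfin : ({A : SMat | A ∈ Bset n ∧ ¬ (∀ i, rowNonzero A.2 i)} : Set SMat).Finite :=
    hBfin.subset fun A hA => hA.1
  have hdisj : Disjoint (RMset n)
      {A : SMat | A ∈ Bset n ∧ ¬ (∀ i, rowNonzero A.2 i)} := by
    rw [Set.disjoint_left]
    rintro ⟨m, M⟩ ⟨_, hrow, _⟩ ⟨_, hnot⟩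
    exact hnot hrow
  rw [bset_split n, Set.ncard_union_eq hdisj hRMfin hZfin, zero_part_eq_image n,
    Set.ncard_image_of_injective _ emb_injective]
  ring
end

section
/- For all n ≥ 1 and k ≥ 0, the number of matrices in B(n) whose first row has sum 0 and whose last column has sum k equals the number of row-Fishburn matrices of size n whose last column has sum k; that is, |B(n,k,0)| = |RM(n,k)|. -/
open Finset

/-!
Deleting the first row and the first column of a matrix in `B(n,k,0)` gives a row-Fishburn
matrix of the same size and last-column sum; nothing is lost, since the first row has sum `0` and
the rest of the first column lies below the diagonal. Conversely, bordering a row-Fishburn matrix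
with a zero row and a zero column lands in `B(n,k,0)`. A matrix of positive size has positive
dimension, so the two operations are mutually inverse bijections.
-/

def padTopLeft {m : ℕ} (N : Mat m) : Mat (m + 1) :=
  fun i j => Fin.cases 0 (fun i' => Fin.cases 0 (fun j' => N i' j') j) i

def dropTopLeft {m : ℕ} (M : Mat (m + 1)) : Mat m := fun i j => M i.succ j.succ

section padTopLeft

variable {m : ℕ}

@[simp] lemma padTopLeft_zero (N : Mat m) (j : Fin (m + 1)) : padTopLeft N 0 j = 0 := rfl

@[simp] lemma padTopLeft_succ_zero (N : Mat m) (i : Fin m) : padTopLeft N i.succ 0 = 0 := rfl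

@[simp] lemma padTopLeft_succ_succ (N : Mat m) (i j : Fin m) :
    padTopLeft N i.succ j.succ = N i j := rfl

@[simp] lemma dropTopLeft_padTopLeft (N : Mat m) : dropTopLeft (padTopLeft N) = N := rfl

lemma padTopLeft_injective : Function.Injective (padTopLeft (m := m)) := fun N N' h => by
  rw [← dropTopLeft_padTopLeft N, h, dropTopLeft_padTopLeft]

lemma msize_padTopLeft (N : Mat m) : msize (padTopLeft N) = msize N := by
  simp [msize, Fin.sum_univ_succ]

lemma firstRowSum_padTopLeft (N : Mat m) : firstRowSum (padTopLeft N) = 0 := by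
  simp [firstRowSum, Fin.sum_univ_succ]

lemma lastColSum_padTopLeft (N : Mat m) : lastColSum (padTopLeft N) = lastColSum N := by
  simp only [lastColSum, Fin.sum_univ_succ, padTopLeft_zero, padTopLeft_succ_zero,
    padTopLeft_succ_succ, Fin.val_succ, Fin.val_zero, ite_self, sum_const_zero]
  simp

lemma UT_padTopLeft_iff {N : Mat m} : UT (padTopLeft N) ↔ UT N := by
  constructor
  · intro h i j hij
    simpa using h i.succ j.succ (by simpa using hij)
  · intro h i j hij
    cases i using Fin.cases with
    | zero => rfl
    | succ i =>
      cases j using Fin.cases with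
      | zero => rfl
      | succ j => exact h i j (by simpa using hij)

lemma rowNonzero_padTopLeft_succ_iff {N : Mat m} {i : Fin m} :
    rowNonzero (padTopLeft N) i.succ ↔ rowNonzero N i := by
  simp [rowNonzero, Fin.exists_fin_succ]

lemma firstRow_eq_zero {M : Mat (m + 1)} (h : firstRowSum M = 0) (j : Fin (m + 1)) :
    M 0 j = 0 := by
  have hrow := Finset.sum_eq_zero_iff.mp h 0 (mem_univ _)
  simp only [Fin.val_zero, if_true, Finset.sum_eq_zero_iff, mem_univ, true_implies] at hrow
  exact hrow j

lemma padTopLeft_dropTopLeft {M : Mat (m + 1)} (hUT : UT M) (h0 : firstRowSum M = 0) :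
    padTopLeft (dropTopLeft M) = M := by
  funext i j
  cases i using Fin.cases with
  | zero => exact (firstRow_eq_zero h0 j).symm
  | succ i =>
    cases j using Fin.cases with
    | zero => exact (hUT i.succ 0 (Fin.succ_pos i)).symm
    | succ j => rfl

end padTopLeft

def SMat.pad (A : SMat) : SMat := ⟨A.1 + 1, padTopLeft A.2⟩

lemma SMat.pad_injective : Function.Injective SMat.pad := by
  rintro ⟨m, N⟩ ⟨m', N'⟩ h
  simp only [SMat.pad, Sigma.mk.inj_iff, Nat.add_right_cancel_iff] at h
  obtain ⟨rfl, h⟩ := h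
  rw [padTopLeft_injective (eq_of_heq h)]

lemma SMat.pad_mem_Bset₃_zero_iff {A : SMat} {n k : ℕ} :
    A.pad ∈ Bset₃ n k 0 ↔ A ∈ RMset₂ n k := by
  obtain ⟨m, N⟩ := A
  simp [Bset₃, Bset, RMset₂, RMset, SMat.pad, UT_padTopLeft_iff, msize_padTopLeft,
    firstRowSum_padTopLeft, lastColSum_padTopLeft, Fin.forall_fin_succ,
    rowNonzero_padTopLeft_succ_iff]

lemma mem_range_pad_of_mem_Bset₃_zero {A : SMat} {n k : ℕ} (hn : 1 ≤ n)
    (hA : A ∈ Bset₃ n k 0) : A ∈ Set.range SMat.pad := by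
  obtain ⟨m, M⟩ := A
  obtain ⟨⟨hUT, -, hsize⟩, h0, -⟩ := hA
  cases m with
  | zero => simp [msize] at hsize; omega
  | succ m => exact ⟨⟨m, dropTopLeft M⟩, by rw [SMat.pad, padTopLeft_dropTopLeft hUT h0]⟩

lemma Bset₃_zero_eq_image_pad {n k : ℕ} (hn : 1 ≤ n) :
    Bset₃ n k 0 = SMat.pad '' RMset₂ n k := by
  ext A
  constructor
  · intro hA
    obtain ⟨B, rfl⟩ := mem_range_pad_of_mem_Bset₃_zero hn hA
    exact ⟨B, SMat.pad_mem_Bset₃_zero_iff.mp hA, rfl⟩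
  · rintro ⟨B, hB, rfl⟩
    exact SMat.pad_mem_Bset₃_zero_iff.mpr hB

/-- `|B(n,k,0)| = |RM(n,k)|` for all `n ≥ 1`, `k ≥ 0`. -/
theorem stmt9 (n k : ℕ) (hn : 1 ≤ n) :
    (Bset₃ n k 0).ncard = (RMset₂ n k).ncard := by
  rw [Bset₃_zero_eq_image_pad hn, Set.ncard_image_of_injective _ SMat.pad_injective]
end
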